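/- arXiv:2004.06472 — 9 statements merged into one kernel-verified Lean document; each statement's English description precedes it below -/
import Mathlib

section
/- Let X be a compact Hausdorff space and let x₁, x₂, x₃ ∈ X be three distinct points. Define μ : C(X) → ℂ by μ(f) = f(x₁) if f(x₁) = f(x₂) and f(x₁) ≠ f(x₃), and μ(f) = f(x₃) otherwise. Then μ is homogeneous (μ(c·f) = c·μ(f) for all c ∈ ℂ and f ∈ C(X)), μ(1_X) = 1, μ(1_X − f) = μ(1_X) − μ(f) for every f ∈ C(X), and μ is not additive, i.e. there exist f, g ∈ C(X) with μ(f + g) ≠ μ(f) + μ(g). -/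
/-!
The value `μ f` depends only on the triple `(f x₁, f x₂, f x₃)`, and the rule choosing between
`f x₁` and `f x₃` only tests equalities among these values, so it commutes with every injective
map `ℂ → ℂ`; applying this to `z ↦ c z` (`c ≠ 0`) and `z ↦ 1 - z` gives the two identities.
Additivity fails because adding a function separating `x₁` from `x₂` can destroy the pattern
`f x₁ = f x₂ ≠ f x₃`.
-/

noncomputable section

/-- The diameter seminorm `ρ(f) = sup{|f(x) - f(z)| : x, z ∈ X}` on `C(X, ℂ)`. -/
def cdiam {X : Type*} [TopologicalSpace X] (f : C(X, ℂ)) : ℝ :=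
  ⨆ p : X × X, ‖f p.1 - f p.2‖

/-- A map `Δ : C(X) → C(Y)` is diameter-preserving if `ρ(Δ f - Δ g) = ρ(f - g)` for all `f, g`. -/
def DiamPreserving {X Y : Type*} [TopologicalSpace X] [TopologicalSpace Y]
    (Δ : C(X, ℂ) → C(Y, ℂ)) : Prop :=
  ∀ f g, cdiam (Δ f - Δ g) = cdiam (f - g)

/-- A map `Δ : C(X) → C(Y)` is a 2-local diameter-preserving map if for every `f, g` there is a
diameter-preserving linear bijection agreeing with `Δ` at `f` and `g`. -/
def TwoLocalDiamPreserving {X Y : Type*} [TopologicalSpace X] [TopologicalSpace Y]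
    (Δ : C(X, ℂ) → C(Y, ℂ)) : Prop :=
  ∀ f g : C(X, ℂ), ∃ T : C(X, ℂ) →ₗ[ℂ] C(Y, ℂ),
    Function.Bijective T ∧ DiamPreserving T ∧ T f = Δ f ∧ T g = Δ g

open Function

/-- The functional of the theorem is `f ↦ select₃ (f x₁) (f x₂) (f x₃)`. -/
def select₃ {α : Type*} (a b c : α) : α :=
  open Classical in if a = b ∧ a ≠ c then a else c

theorem select₃_self {α : Type*} (a : α) : select₃ a a a = a := by
  simp [select₃]

theorem select₃_map_of_injective {α β : Type*} {φ : α → β} (hφ : Injective φ) (a b c : α) :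
    select₃ (φ a) (φ b) (φ c) = φ (select₃ a b c) := by
  unfold select₃
  split_ifs <;> simp_all [hφ.eq_iff]

theorem exists_continuousMap_complex_zero_one {X : Type*} [TopologicalSpace X] [NormalSpace X]
    {s t : Set X} (hs : IsClosed s) (ht : IsClosed t) (hd : Disjoint s t) :
    ∃ f : C(X, ℂ), Set.EqOn f 0 s ∧ Set.EqOn f 1 t := by
  obtain ⟨f, hf0, hf1, -⟩ := exists_continuous_zero_one_of_isClosed hs ht hd
  refine ⟨⟨fun x => (f x : ℂ), by fun_prop⟩, fun x hx => ?_, fun x hx => ?_⟩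
  · simp [hf0 hx]
  · simp [hf1 hx]

/-- The functional `μ(f) = f(x₁)` if `f(x₁) = f(x₂)` and `f(x₁) ≠ f(x₃)`, and `μ(f) = f(x₃)`
otherwise, is homogeneous, satisfies `μ(1_X) = 1` and `μ(1_X - f) = μ(1_X) - μ(f)`, but is not
additive. -/
theorem homogeneous_nonadditive_functional
    {X : Type*} [TopologicalSpace X] [CompactSpace X] [T2Space X]
    (x₁ x₂ x₃ : X) (h12 : x₁ ≠ x₂) (h13 : x₁ ≠ x₃) (h23 : x₂ ≠ x₃)
    (μ : C(X, ℂ) → ℂ)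
    (hμ₁ : ∀ f : C(X, ℂ), (f x₁ = f x₂ ∧ f x₁ ≠ f x₃) → μ f = f x₁)
    (hμ₂ : ∀ f : C(X, ℂ), ¬(f x₁ = f x₂ ∧ f x₁ ≠ f x₃) → μ f = f x₃) :
    (∀ (c : ℂ) (f : C(X, ℂ)), μ (c • f) = c * μ f) ∧
    μ 1 = 1 ∧
    (∀ f : C(X, ℂ), μ (1 - f) = μ 1 - μ f) ∧
    (∃ f g : C(X, ℂ), μ (f + g) ≠ μ f + μ g) := by
  have hμ (f : C(X, ℂ)) : μ f = select₃ (f x₁) (f x₂) (f x₃) := by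
    by_cases h : f x₁ = f x₂ ∧ f x₁ ≠ f x₃
    · simp [hμ₁ f h, select₃, h]
    · simp [hμ₂ f h, select₃, h]
  have hμ_one : μ 1 = 1 := by simp [hμ, select₃_self]
  refine ⟨fun c f => ?_, hμ_one, fun f => ?_, ?_⟩
  · rcases eq_or_ne c 0 with rfl | hc
    · simp [hμ, select₃_self]
    · simpa [hμ] using select₃_map_of_injective (mul_right_injective₀ hc) (f x₁) (f x₂) (f x₃)
  · rw [hμ_one]
    simpa [hμ] using select₃_map_of_injective (sub_right_injective (b := (1 : ℂ)))
      (f x₁) (f x₂) (f x₃)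
  · obtain ⟨f, hf₃, hf₁₂⟩ := exists_continuousMap_complex_zero_one (isClosed_singleton (x := x₃))
      (Set.toFinite {x₁, x₂}).isClosed (by simp [h13.symm, h23.symm])
    obtain ⟨g, hg₁₃, hg₂⟩ := exists_continuousMap_complex_zero_one (Set.toFinite {x₁, x₃}).isClosed
      (isClosed_singleton (x := x₂)) (by simp [h12.symm, h23])
    -- the triples are `(1, 1, 0)` and `(0, 1, 0)`, with values `1` and `0`, but `(1, 2, 0)` gives `0`
    refine ⟨f, g, ?_⟩
    simp only [hμ, ContinuousMap.add_apply, hf₃ rfl, hf₁₂ (.inl rfl), hf₁₂ (.inr rfl),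
      hg₂ rfl, hg₁₃ (.inl rfl), hg₁₃ (.inr rfl)]
    norm_num [select₃]
end
end

section
/- Let X be a compact Hausdorff space and let μ : C(X) → ℂ be a homogeneous functional (μ(c·f) = c·μ(f) for all c ∈ ℂ, f ∈ C(X)) satisfying μ(1_X − f) = μ(1_X) − μ(f) for all f ∈ C(X). Then for any f, g ∈ C(X) there exists a linear functional ν : C(X) → ℂ such that ν(f) = μ(f), ν(g) = μ(g) and ν(1_X) = μ(1_X). -/
noncomputable section

/-- For a homogeneous functional `μ` with `μ(1 - f) = μ(1) - μ(f)`, and any `f, g`, there is a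
linear functional agreeing with `μ` at `f`, `g` and `1`. -/
theorem exists_linear_functional_agreeing
    {X : Type*} [TopologicalSpace X] [CompactSpace X] [T2Space X]
    (μ : C(X, ℂ) → ℂ)
    (hhom : ∀ (c : ℂ) (f : C(X, ℂ)), μ (c • f) = c * μ f)
    (hsub : ∀ f : C(X, ℂ), μ (1 - f) = μ 1 - μ f)
    (f g : C(X, ℂ)) :
    ∃ ν : C(X, ℂ) →ₗ[ℂ] ℂ, ν f = μ f ∧ ν g = μ g ∧ ν 1 = μ 1 := by
  have hneg : ∀ h : C(X, ℂ), μ (-h) = -μ h := by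
    intro h; simpa using hhom (-1) h
  have hadd1 : ∀ h : C(X, ℂ), μ (1 + h) = μ 1 + μ h := by
    intro h
    have h1 := hsub (-h)
    rw [hneg] at h1
    simpa [sub_neg_eq_add] using h1
  have key : ∀ (c : ℂ) (h : C(X, ℂ)), μ (c • 1 + h) = c * μ 1 + μ h := by
    intro c h
    rcases eq_or_ne c 0 with rfl | hc
    · simp
    · have e : c • (1 : C(X, ℂ)) + h = c • (1 + c⁻¹ • h) := by
        rw [smul_add, smul_smul, mul_inv_cancel₀ hc, one_smul]
      rw [e, hhom, hadd1, hhom, mul_add, ← mul_assoc, mul_inv_cancel₀ hc, one_mul]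
  set L : (Fin 3 → ℂ) →ₗ[ℂ] C(X, ℂ) :=
    (LinearMap.proj 0).smulRight 1 + (LinearMap.proj 1).smulRight f
      + (LinearMap.proj 2).smulRight g with hL
  have hLapp : ∀ a : Fin 3 → ℂ, L a = a 0 • 1 + a 1 • f + a 2 • g := by
    intro a; simp [hL]
  set c : Module.Dual ℂ (Fin 3 → ℂ) :=
    μ 1 • LinearMap.proj 0 + μ f • LinearMap.proj 1 + μ g • LinearMap.proj 2 with hc
  have hcapp : ∀ a : Fin 3 → ℂ, c a = a 0 * μ 1 + a 1 * μ f + a 2 * μ g := by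
    intro a; simp [hc]; ring
  have hmem : c ∈ (LinearMap.ker L).dualAnnihilator := by
    rw [Submodule.mem_dualAnnihilator]
    intro a ha
    rw [LinearMap.mem_ker, hLapp] at ha
    rw [hcapp]
    rcases eq_or_ne (a 2) 0 with h2 | h2
    · rw [h2, zero_smul, add_zero] at ha
      have e1 : a 1 • f = -(a 0 • (1 : C(X, ℂ))) := eq_neg_of_add_eq_zero_right ha
      have e2 : a 1 * μ f = -a 0 * μ 1 := by
        rw [← hhom, e1, ← neg_smul, hhom]
      linear_combination e2 + μ g * h2
    · have e1 : a 2 • g = -(a 0 • (1 : C(X, ℂ)) + a 1 • f) := eq_neg_of_add_eq_zero_right ha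
      have e2 : a 2 * μ g = -a 0 * μ 1 + -a 1 * μ f := by
        rw [← hhom, e1, neg_add, ← neg_smul, ← neg_smul, key, hhom]
      linear_combination e2
  rw [← LinearMap.range_dualMap_eq_dualAnnihilator_ker] at hmem
  obtain ⟨ν, hν⟩ := hmem
  refine ⟨ν, ?_, ?_, ?_⟩
  · have h := DFunLike.congr_fun hν (Pi.single 1 1)
    simpa [hLapp, hcapp, Pi.single_apply] using h
  · have h := DFunLike.congr_fun hν (Pi.single 2 1)
    simpa [hLapp, hcapp, Pi.single_apply] using h
  · have h := DFunLike.congr_fun hν (Pi.single 0 1)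
    simpa [hLapp, hcapp, Pi.single_apply] using h
end
end

section
/- Let X and Y be homeomorphic compact Hausdorff spaces each having at least three points, let φ : Y → X be a homeomorphism, and let μ : C(X) → ℂ be a homogeneous functional which is not additive and satisfies μ(1_X) ≠ −1 and μ(1_X − f) = μ(1_X) − μ(f) for all f ∈ C(X). Then the map Δ : C(X) → C(Y) defined by Δ(f) = f ∘ φ + μ(f)·1_Y is a 2-local diameter-preserving map which is homogeneous but not additive; in particular, for every compact Hausdorff space X with at least three points there exists a 2-local diameter-preserving map from C(X) to C(X) which is not linear. -/
noncomputable section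

/-! ### Auxiliary material -/

namespace TwoLocalAux

open ContinuousMap

variable {X Y : Type*} [TopologicalSpace X] [TopologicalSpace Y]

/-- `μ(h + c·1) = μ(h) + c·μ(1)` for homogeneous `μ` with `μ(1-f) = μ(1) - μ(f)`. -/
lemma mu_add_const (μ : C(X, ℂ) → ℂ)
    (hhom : ∀ (c : ℂ) (f : C(X, ℂ)), μ (c • f) = c * μ f)
    (hsub : ∀ f : C(X, ℂ), μ (1 - f) = μ 1 - μ f)
    (h : C(X, ℂ)) (c : ℂ) : μ (h + c • 1) = μ h + c * μ 1 := by
  have hneg : ∀ f : C(X, ℂ), μ (-f) = - μ f := by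
    intro f
    have h2 := hhom (-1) f
    have h3 : (-1 : ℂ) • f = -f := by ext x; simp
    rw [h3] at h2
    rw [h2]
    ring
  have hadd1 : ∀ f : C(X, ℂ), μ (f + 1) = μ f + μ 1 := by
    intro f
    have h2 := hsub (-f)
    have h3 : (1 : C(X, ℂ)) - (-f) = f + 1 := by ext x; simp; ring
    rw [h3, hneg] at h2
    rw [h2]
    ring
  by_cases hc : c = 0
  · have h3 : h + c • (1 : C(X, ℂ)) = h := by ext x; simp [hc]
    rw [h3, hc]
    ring
  · have he : h + c • (1 : C(X, ℂ)) = c • ((c⁻¹ • h) + 1) := by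
      ext x
      simp only [ContinuousMap.add_apply, ContinuousMap.smul_apply, ContinuousMap.one_apply,
        smul_eq_mul, mul_one]
      field_simp
    rw [he, hhom, hadd1, hhom]
    field_simp

lemma mu_rel [Nonempty X] (μ : C(X, ℂ) → ℂ)
    (hhom : ∀ (c : ℂ) (f : C(X, ℂ)), μ (c • f) = c * μ f)
    (hsub : ∀ f : C(X, ℂ), μ (1 - f) = μ 1 - μ f)
    (f g : C(X, ℂ)) (a b c : ℂ) (h : a • f + b • g + c • (1 : C(X, ℂ)) = 0) :
    a * μ f + b * μ g + c * μ 1 = 0 := by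
  have hconst := mu_add_const μ hhom hsub
  have hpt : ∀ x : X, a * f x + b * g x + c = 0 := by
    intro x
    have h2 := congrArg (fun F : C(X, ℂ) => F x) h
    simpa using h2
  by_cases ha : a = 0
  · by_cases hb : b = 0
    · have hc : c = 0 := by
        have h2 := hpt (Classical.arbitrary X)
        rw [ha, hb] at h2
        simpa using h2
      simp [ha, hb, hc]
    · have hg : g = (-(b⁻¹ * c)) • (1 : C(X, ℂ)) := by
        ext x
        have h2 := hpt x
        rw [ha] at h2
        simp only [ContinuousMap.smul_apply, ContinuousMap.one_apply, smul_eq_mul, mul_one]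
        field_simp
        linear_combination h2
      have hmg : μ g = -(b⁻¹ * c) * μ 1 := by rw [hg, hhom]
      rw [ha, hmg]
      field_simp
      ring
  · have hf : f = (-(a⁻¹ * b)) • g + (-(a⁻¹ * c)) • (1 : C(X, ℂ)) := by
      ext x
      have h2 := hpt x
      simp only [ContinuousMap.add_apply, ContinuousMap.smul_apply, ContinuousMap.one_apply,
        smul_eq_mul, mul_one]
      field_simp
      linear_combination h2
    have hmf : μ f = -(a⁻¹ * b) * μ g + -(a⁻¹ * c) * μ 1 := by
      rw [hf, hconst, hhom]
    rw [hmf]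
    field_simp
    ring

/-- The linear map `(a,b,c) ↦ a f + b g + c 1`. -/
def uMap (f g : C(X, ℂ)) : (ℂ × ℂ × ℂ) →ₗ[ℂ] C(X, ℂ) where
  toFun c := c.1 • f + c.2.1 • g + c.2.2 • (1 : C(X, ℂ))
  map_add' x y := by
    ext z
    simp only [Prod.fst_add, Prod.snd_add, ContinuousMap.add_apply, ContinuousMap.smul_apply,
      ContinuousMap.one_apply, smul_eq_mul, mul_one]
    ring
  map_smul' m x := by
    ext z
    simp only [Prod.smul_fst, Prod.smul_snd, smul_eq_mul, RingHom.id_apply,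
      ContinuousMap.add_apply, ContinuousMap.smul_apply, ContinuousMap.one_apply, mul_one]
    ring

@[simp] lemma uMap_apply (f g : C(X, ℂ)) (c : ℂ × ℂ × ℂ) :
    uMap f g c = c.1 • f + c.2.1 • g + c.2.2 • (1 : C(X, ℂ)) := rfl

/-- The linear map `(a,b,c) ↦ a μ(f) + b μ(g) + c μ(1)`. -/
def wMap (μ : C(X, ℂ) → ℂ) (f g : C(X, ℂ)) : (ℂ × ℂ × ℂ) →ₗ[ℂ] ℂ where
  toFun c := c.1 * μ f + c.2.1 * μ g + c.2.2 * μ 1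
  map_add' x y := by
    simp only [Prod.fst_add, Prod.snd_add]
    ring
  map_smul' m x := by
    simp only [Prod.smul_fst, Prod.smul_snd, smul_eq_mul, RingHom.id_apply]
    ring

@[simp] lemma wMap_apply (μ : C(X, ℂ) → ℂ) (f g : C(X, ℂ)) (c : ℂ × ℂ × ℂ) :
    wMap μ f g c = c.1 * μ f + c.2.1 * μ g + c.2.2 * μ 1 := rfl

/-- There is a linear functional agreeing with `μ` at `f`, `g` and `1`. -/
lemma exists_lambda [Nonempty X] (μ : C(X, ℂ) → ℂ)
    (hhom : ∀ (c : ℂ) (f : C(X, ℂ)), μ (c • f) = c * μ f)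
    (hsub : ∀ f : C(X, ℂ), μ (1 - f) = μ 1 - μ f) (f g : C(X, ℂ)) :
    ∃ Λ : C(X, ℂ) →ₗ[ℂ] ℂ, Λ f = μ f ∧ Λ g = μ g ∧ Λ 1 = μ 1 := by
  have hker : LinearMap.ker (uMap f g) ≤ LinearMap.ker (wMap μ f g) := by
    intro c hc
    rw [LinearMap.mem_ker] at hc ⊢
    rw [wMap_apply]
    exact mu_rel μ hhom hsub f g c.1 c.2.1 c.2.2 hc
  obtain ⟨Λ, hΛ⟩ := LinearMap.exists_extend
    ((Submodule.liftQ (LinearMap.ker (uMap f g)) (wMap μ f g) hker).comp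
      (LinearMap.quotKerEquivRange (uMap f g)).symm.toLinearMap)
  have key : ∀ c : ℂ × ℂ × ℂ, Λ (uMap f g c) = wMap μ f g c := by
    intro c
    have hmem : uMap f g c ∈ LinearMap.range (uMap f g) := LinearMap.mem_range_self _ c
    have h1 : Λ (uMap f g c) = Λ ((LinearMap.range (uMap f g)).subtype ⟨uMap f g c, hmem⟩) := rfl
    rw [h1, ← LinearMap.comp_apply, hΛ]
    simp only [LinearMap.comp_apply, LinearEquiv.coe_toLinearMap]
    rw [LinearMap.quotKerEquivRange_symm_apply_image (uMap f g) c hmem, Submodule.mkQ_apply,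
      Submodule.liftQ_apply]
  refine ⟨Λ, ?_, ?_, ?_⟩
  · have h3 : uMap f g ((1 : ℂ), (0 : ℂ), (0 : ℂ)) = f := by ext x; simp
    have h4 := key (1, 0, 0)
    rw [h3] at h4
    rw [h4, wMap_apply]
    ring
  · have h3 : uMap f g ((0 : ℂ), (1 : ℂ), (0 : ℂ)) = g := by ext x; simp
    have h4 := key (0, 1, 0)
    rw [h3] at h4
    rw [h4, wMap_apply]
    ring
  · have h3 : uMap f g ((0 : ℂ), (0 : ℂ), (1 : ℂ)) = 1 := by ext x; simp
    have h4 := key (0, 0, 1)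
    rw [h3] at h4
    rw [h4, wMap_apply]
    ring

/-- The main construction: `Δ f = f∘φ + μ(f)·1` is 2-local diameter preserving. -/
lemma key_twoLocal [Nonempty X] (φ : Y ≃ₜ X) (μ : C(X, ℂ) → ℂ)
    (hhom : ∀ (c : ℂ) (f : C(X, ℂ)), μ (c • f) = c * μ f)
    (hone : μ 1 ≠ -1)
    (hsub : ∀ f : C(X, ℂ), μ (1 - f) = μ 1 - μ f)
    (Δ : C(X, ℂ) → C(Y, ℂ))
    (hΔ : ∀ f : C(X, ℂ), Δ f = f.comp (φ : C(Y, X)) + μ f • 1) :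
    TwoLocalDiamPreserving Δ := by
  intro f g
  obtain ⟨Λ, hf, hg, h1⟩ := exists_lambda μ hhom hsub f g
  have hδ : (1 : ℂ) + Λ 1 ≠ 0 := by
    rw [h1]
    intro hcon
    exact hone (by linear_combination hcon)
  set T : C(X, ℂ) →ₗ[ℂ] C(Y, ℂ) :=
    { toFun := fun h => h.comp (φ : C(Y, X)) + Λ h • 1
      map_add' := by
        intro h k
        ext y
        simp only [ContinuousMap.add_apply, ContinuousMap.comp_apply, ContinuousMap.smul_apply,
          ContinuousMap.one_apply, smul_eq_mul, mul_one, map_add]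
        ring
      map_smul' := by
        intro c h
        ext y
        simp only [ContinuousMap.add_apply, ContinuousMap.comp_apply, ContinuousMap.smul_apply,
          ContinuousMap.one_apply, smul_eq_mul, mul_one, map_smul, RingHom.id_apply]
        ring } with hT
  have Tapp : ∀ h : C(X, ℂ), T h = h.comp (φ : C(Y, X)) + Λ h • 1 := fun h => rfl
  refine ⟨T, ?_, ?_, ?_, ?_⟩
  · -- bijective
    refine Function.bijective_iff_has_inverse.2
      ⟨fun k => k.comp (φ.symm : C(X, Y)) - ((1 + Λ 1)⁻¹ * Λ (k.comp (φ.symm : C(X, Y)))) • 1,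
        ?_, ?_⟩
    · intro h
      dsimp only
      have hcomp : (T h).comp (φ.symm : C(X, Y)) = h + Λ h • 1 := by
        ext x
        simp [Tapp]
      rw [hcomp]
      have hl : Λ (h + Λ h • 1) = Λ h + Λ h * Λ 1 := by
        rw [map_add, map_smul, smul_eq_mul]
      rw [hl]
      have hco : (1 + Λ 1)⁻¹ * (Λ h + Λ h * Λ 1) = Λ h := by
        field_simp
      rw [hco]
      ext x
      simp
    · intro k
      dsimp only
      have hl : Λ ((k.comp (φ.symm : C(X, Y))) - ((1 + Λ 1)⁻¹ * Λ (k.comp (φ.symm : C(X, Y)))) • 1)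
          = Λ (k.comp (φ.symm : C(X, Y))) - (1 + Λ 1)⁻¹ * Λ (k.comp (φ.symm : C(X, Y))) * Λ 1 := by
        rw [map_sub, map_smul, smul_eq_mul]
      rw [Tapp]
      have hcomp : ((k.comp (φ.symm : C(X, Y)))
            - ((1 + Λ 1)⁻¹ * Λ (k.comp (φ.symm : C(X, Y)))) • 1).comp (φ : C(Y, X))
          = k - ((1 + Λ 1)⁻¹ * Λ (k.comp (φ.symm : C(X, Y)))) • 1 := by
        ext y
        simp
      rw [hcomp, hl]
      ext y
      simp only [ContinuousMap.add_apply, ContinuousMap.sub_apply, ContinuousMap.smul_apply,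
        ContinuousMap.one_apply, smul_eq_mul, mul_one]
      field_simp
      ring
  · -- diameter preserving
    intro h k
    have hp : ∀ y : Y, (T h - T k) y = (h - k) (φ y) + (Λ h - Λ k) := by
      intro y
      simp [Tapp]
      ring
    have e1 : ∀ p : Y × Y, ‖(T h - T k) p.1 - (T h - T k) p.2‖
        = ‖(h - k) (φ p.1) - (h - k) (φ p.2)‖ := by
      intro p
      rw [hp, hp]
      congr 1
      ring
    calc cdiam (T h - T k)
        = ⨆ p : Y × Y, ‖(h - k) (φ p.1) - (h - k) (φ p.2)‖ := iSup_congr e1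
      _ = ⨆ q : X × X, ‖(h - k) q.1 - (h - k) q.2‖ := by
          refine Function.Surjective.iSup_congr (fun p : Y × Y => ((φ p.1, φ p.2) : X × X))
            ?_ (fun p => rfl)
          intro q
          exact ⟨(φ.symm q.1, φ.symm q.2), by simp⟩
      _ = cdiam (h - k) := rfl
  · rw [Tapp, hf, hΔ]
  · rw [Tapp, hg, hΔ]

/-- The non-additive homogeneous functional on `C(Z, ℂ)` built from three points. -/
def muZ {Z : Type} [TopologicalSpace Z] (z₁ z₂ z₃ : Z) (f : C(Z, ℂ)) : ℂ :=
  if f z₁ - f z₃ = 0 then f z₁ - f z₂ else (f z₁ - f z₂) ^ 2 / (f z₁ - f z₃)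

lemma muZ_hom {Z : Type} [TopologicalSpace Z] (z₁ z₂ z₃ : Z) (c : ℂ) (f : C(Z, ℂ)) :
    muZ z₁ z₂ z₃ (c • f) = c * muZ z₁ z₂ z₃ f := by
  unfold muZ
  simp only [ContinuousMap.smul_apply, smul_eq_mul]
  by_cases hc : c = 0
  · simp [hc]
  · by_cases hb : f z₁ - f z₃ = 0
    · rw [if_pos hb, if_pos (by rw [← mul_sub, hb, mul_zero])]
      ring
    · rw [if_neg hb, if_neg (by rw [← mul_sub]; exact mul_ne_zero hc hb)]
      rw [← mul_sub, ← mul_sub]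
      field_simp

lemma muZ_one {Z : Type} [TopologicalSpace Z] (z₁ z₂ z₃ : Z) :
    muZ z₁ z₂ z₃ 1 = 0 := by
  unfold muZ
  simp

lemma muZ_sub {Z : Type} [TopologicalSpace Z] (z₁ z₂ z₃ : Z) (f : C(Z, ℂ)) :
    muZ z₁ z₂ z₃ (1 - f) = muZ z₁ z₂ z₃ 1 - muZ z₁ z₂ z₃ f := by
  rw [muZ_one, zero_sub]
  unfold muZ
  simp only [ContinuousMap.sub_apply, ContinuousMap.one_apply]
  have e1 : 1 - f z₁ - (1 - f z₃) = -(f z₁ - f z₃) := by ring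
  have e2 : 1 - f z₁ - (1 - f z₂) = -(f z₁ - f z₂) := by ring
  simp only [e1, e2]
  by_cases hb : f z₁ - f z₃ = 0
  · rw [if_pos (by rw [hb, neg_zero]), if_pos hb]
  · rw [if_neg (show ¬(-(f z₁ - f z₃)) = 0 by rw [neg_eq_zero]; exact hb), if_neg hb, neg_sq,
      div_neg]

/-- Continuous indicator-like function with prescribed values on finite disjoint sets. -/
lemma exists_indicator {Z : Type} [TopologicalSpace Z] [CompactSpace Z] [T2Space Z]
    (s t : Set Z) (hs : s.Finite) (ht : t.Finite) (hd : Disjoint s t) :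
    ∃ f : C(Z, ℂ), (∀ z ∈ s, f z = 0) ∧ ∀ z ∈ t, f z = 1 := by
  obtain ⟨u, hu0, hu1, -⟩ := exists_continuous_zero_one_of_isClosed hs.isClosed ht.isClosed hd
  refine ⟨(ContinuousMap.mk Complex.ofReal Complex.continuous_ofReal).comp u, ?_, ?_⟩
  · intro z hz
    have h2 := hu0 hz
    simp only [ContinuousMap.comp_apply, ContinuousMap.coe_mk]
    rw [show u z = 0 from h2]
    simp
  · intro z hz
    have h2 := hu1 hz
    simp only [ContinuousMap.comp_apply, ContinuousMap.coe_mk]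
    rw [show u z = 1 from h2]
    simp

end TwoLocalAux

open TwoLocalAux in
/-- Example: `Δ f = f ∘ φ + μ(f) 1_Y` with `μ` homogeneous, non-additive, `μ(1) ≠ -1` and
`μ(1 - f) = μ(1) - μ(f)` is a 2-local diameter-preserving map which is homogeneous but not
additive; in particular every compact Hausdorff space with at least three points carries a
non-linear 2-local diameter-preserving self-map. -/
theorem twoLocal_diamPreserving_nonlinear_example
    {X Y : Type*} [TopologicalSpace X] [CompactSpace X] [T2Space X]
    [TopologicalSpace Y] [CompactSpace Y] [T2Space Y]
    (hX : ∃ x₁ x₂ x₃ : X, x₁ ≠ x₂ ∧ x₁ ≠ x₃ ∧ x₂ ≠ x₃)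
    (hY : ∃ y₁ y₂ y₃ : Y, y₁ ≠ y₂ ∧ y₁ ≠ y₃ ∧ y₂ ≠ y₃)
    (φ : Y ≃ₜ X) (μ : C(X, ℂ) → ℂ)
    (hhom : ∀ (c : ℂ) (f : C(X, ℂ)), μ (c • f) = c * μ f)
    (hnadd : ¬ ∀ f g : C(X, ℂ), μ (f + g) = μ f + μ g)
    (hone : μ 1 ≠ -1)
    (hsub : ∀ f : C(X, ℂ), μ (1 - f) = μ 1 - μ f)
    (Δ : C(X, ℂ) → C(Y, ℂ))
    (hΔ : ∀ f : C(X, ℂ), Δ f = f.comp (φ : C(Y, X)) + μ f • 1) :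
    (TwoLocalDiamPreserving Δ ∧ (∀ (c : ℂ) (f : C(X, ℂ)), Δ (c • f) = c • Δ f) ∧
      ¬ ∀ f g : C(X, ℂ), Δ (f + g) = Δ f + Δ g) ∧
    ∀ (Z : Type) (_ : TopologicalSpace Z) (_ : CompactSpace Z) (_ : T2Space Z),
      (∃ z₁ z₂ z₃ : Z, z₁ ≠ z₂ ∧ z₁ ≠ z₃ ∧ z₂ ≠ z₃) →
      ∃ D : C(Z, ℂ) → C(Z, ℂ), TwoLocalDiamPreserving D ∧ ¬ IsLinearMap ℂ D := by
  obtain ⟨x₁, x₂, x₃, hx12, hx13, hx23⟩ := hX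
  obtain ⟨y₁, -, -, -, -, -⟩ := hY
  have hNX : Nonempty X := ⟨x₁⟩
  constructor
  · refine ⟨key_twoLocal φ μ hhom hone hsub Δ hΔ, ?_, ?_⟩
    · intro c f
      rw [hΔ, hΔ]
      ext y
      simp only [ContinuousMap.add_apply, ContinuousMap.comp_apply, ContinuousMap.smul_apply,
        ContinuousMap.one_apply, smul_eq_mul, mul_one, hhom]
      ring
    · intro hadd
      apply hnadd
      intro f g
      have h := hadd f g
      rw [hΔ, hΔ, hΔ] at h
      have h2 := congrArg (fun F : C(Y, ℂ) => F y₁) h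
      simp only [ContinuousMap.add_apply, ContinuousMap.smul_apply, ContinuousMap.one_apply,
        ContinuousMap.comp_apply, smul_eq_mul, mul_one] at h2
      linear_combination h2
  · rintro Z _ _ _ ⟨z₁, z₂, z₃, h12, h13, h23⟩
    have hNZ : Nonempty Z := ⟨z₁⟩
    refine ⟨fun f => f + muZ z₁ z₂ z₃ f • 1, ?_, ?_⟩
    · exact key_twoLocal (Homeomorph.refl Z) (muZ z₁ z₂ z₃) (muZ_hom z₁ z₂ z₃)
        (by rw [muZ_one]; norm_num) (muZ_sub z₁ z₂ z₃) _
        (fun f => by ext z; simp)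
    · intro hlin
      obtain ⟨f, hf0, hf1⟩ := exists_indicator {z₃} {z₁, z₂} (Set.finite_singleton _)
        (Set.toFinite _)
        (by
          rw [Set.disjoint_left]
          rintro x hx hx2
          rw [Set.mem_singleton_iff] at hx
          rcases hx2 with h | h
          · exact h13 (hx ▸ h.symm ▸ rfl)
          · exact h23 ((h.symm.trans hx).symm ▸ rfl))
      obtain ⟨g, hg0, hg1⟩ := exists_indicator {z₂, z₃} {z₁} (Set.toFinite _)
        (Set.finite_singleton _)
        (by
          rw [Set.disjoint_right]
          rintro x hx hx2
          rw [Set.mem_singleton_iff] at hx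
          rcases hx2 with h | h
          · exact h12 (hx ▸ h ▸ rfl)
          · exact h13 (hx ▸ h ▸ rfl))
      have hfz₁ : f z₁ = 1 := hf1 z₁ (by simp)
      have hfz₂ : f z₂ = 1 := hf1 z₂ (by simp)
      have hfz₃ : f z₃ = 0 := hf0 z₃ (by simp)
      have hgz₁ : g z₁ = 1 := hg1 z₁ (by simp)
      have hgz₂ : g z₂ = 0 := hg0 z₂ (by simp)
      have hgz₃ : g z₃ = 0 := hg0 z₃ (by simp)
      have hmf : muZ z₁ z₂ z₃ f = 0 := by
        unfold muZ
        rw [hfz₁, hfz₂, hfz₃]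
        norm_num
      have hmg : muZ z₁ z₂ z₃ g = 1 := by
        unfold muZ
        rw [hgz₁, hgz₂, hgz₃]
        norm_num
      have hmfg : muZ z₁ z₂ z₃ (f + g) = 1 / 2 := by
        unfold muZ
        simp only [ContinuousMap.add_apply]
        rw [hfz₁, hfz₂, hfz₃, hgz₁, hgz₂, hgz₃]
        norm_num
      have hD := hlin.map_add f g
      have h2 := congrArg (fun F : C(Z, ℂ) => F z₁) hD
      simp only [ContinuousMap.add_apply, ContinuousMap.smul_apply, ContinuousMap.one_apply,
        smul_eq_mul, mul_one] at h2
      rw [hmf, hmg, hmfg, hfz₁, hgz₁] at h2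
      norm_num at h2
end
end

section
/- Let X and Y be compact Hausdorff spaces, fix u₀ ∈ X and w₀ ∈ Y, and let T : C_ρ(X) → C_ρ(Y) be a 2-local isometry. Then the map Δ : C(X) → C(Y) defined by Δ(f) = Ψ_Y⁻¹(T(π_X(f)), f(u₀)) is a 2-local diameter-preserving map. -/
noncomputable section

/-- The subspace `ker ρ` of constant functions in `C(X, ℂ)`. -/
def constFuns (X : Type*) [TopologicalSpace X] : Submodule ℂ C(X, ℂ) :=
  Submodule.span ℂ {(1 : C(X, ℂ))}

/-- The quotient space `C_ρ(X) = C(X)/ker ρ`. -/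
abbrev Crho (X : Type*) [TopologicalSpace X] := C(X, ℂ) ⧸ constFuns X

/-- The canonical quotient map `π_X : C(X) → C_ρ(X)`. -/
def piRho {X : Type*} [TopologicalSpace X] : C(X, ℂ) →ₗ[ℂ] Crho X :=
  (constFuns X).mkQ

/-- The quotient norm on `C_ρ(X)`, `‖π_X f‖_ρ = ρ(f)`. -/
def rhoNorm {X : Type*} [TopologicalSpace X] (u : Crho X) : ℝ :=
  Quotient.liftOn u cdiam (by
    intro a b hab
    have h : a - b ∈ constFuns X := (Submodule.quotientRel_def _).mp hab
    obtain ⟨c, hc⟩ := Submodule.mem_span_singleton.mp h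
    have hpt : ∀ x z : X, a x - a z = b x - b z := by
      intro x z
      have hx : (c • (1 : C(X, ℂ))) x = (a - b) x := by rw [hc]
      have hz : (c • (1 : C(X, ℂ))) z = (a - b) z := by rw [hc]
      simp only [ContinuousMap.smul_apply, ContinuousMap.one_apply, smul_eq_mul, mul_one,
        ContinuousMap.sub_apply] at hx hz
      have h2 : a x - b x = a z - b z := by rw [← hx, ← hz]
      linear_combination h2
    unfold cdiam
    congr 1
    funext p
    rw [show a p.1 - a p.2 = b p.1 - b p.2 from hpt p.1 p.2])

/-- A map `T : C_ρ(X) → C_ρ(Y)` is a 2-local isometry if for every `u, v` there is a surjective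
linear isometry agreeing with `T` at `u` and `v`. -/
def TwoLocalRhoIsometry {X Y : Type*} [TopologicalSpace X] [TopologicalSpace Y]
    (T : Crho X → Crho Y) : Prop :=
  ∀ u v : Crho X, ∃ S : Crho X →ₗ[ℂ] Crho Y,
    Function.Surjective S ∧ (∀ w, rhoNorm (S w) = rhoNorm w) ∧ S u = T u ∧ S v = T v

lemma rhoNorm_piRho {X : Type*} [TopologicalSpace X] (f : C(X, ℂ)) :
    rhoNorm (piRho f) = cdiam f := rfl

lemma cdiam_zero_mem {X : Type*} [TopologicalSpace X] [CompactSpace X] (f : C(X, ℂ))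
    (x₀ : X) (h : cdiam f = 0) : f ∈ constFuns X := by
  have bdd : BddAbove (Set.range fun p : X × X => ‖f p.1 - f p.2‖) := by
    refine ⟨2 * ‖f‖, ?_⟩
    rintro r ⟨p, rfl⟩
    calc ‖f p.1 - f p.2‖ ≤ ‖f p.1‖ + ‖f p.2‖ := by
          exact norm_sub_le _ _
    _ ≤ ‖f‖ + ‖f‖ := add_le_add (f.norm_coe_le_norm p.1) (f.norm_coe_le_norm p.2)
    _ = 2 * ‖f‖ := by ring
  have hconst : ∀ x, f x = f x₀ := by
    intro x
    have hle := le_ciSup bdd (x, x₀)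
    rw [show (⨆ p : X × X, ‖f p.1 - f p.2‖) = 0 from h] at hle
    have h0 : f x - f x₀ = 0 :=
      norm_eq_zero.mp (le_antisymm hle (norm_nonneg _))
    exact sub_eq_zero.mp h0
  exact Submodule.mem_span_singleton.mpr ⟨f x₀, by ext x; simp [hconst x]⟩

lemma piRho_one {X : Type*} [TopologicalSpace X] : piRho (1 : C(X, ℂ)) = 0 := by
  simpa [piRho] using (Submodule.Quotient.mk_eq_zero (constFuns X)).mpr
    (Submodule.mem_span_singleton_self _)

/-- Claim 1: if `T : C_ρ(X) → C_ρ(Y)` is a 2-local isometry then the induced map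
`Δ f = Ψ_Y⁻¹(T(π_X f), f(u₀))` (i.e. `π_Y (Δ f) = T (π_X f)` and `(Δ f)(w₀) = f(u₀)`)
is a 2-local diameter-preserving map. -/
theorem twoLocal_isometry_induces_twoLocal_diamPreserving
    {X Y : Type*} [TopologicalSpace X] [CompactSpace X] [T2Space X]
    [TopologicalSpace Y] [CompactSpace Y] [T2Space Y]
    (u₀ : X) (w₀ : Y) (T : Crho X → Crho Y) (hT : TwoLocalRhoIsometry T)
    (Δ : C(X, ℂ) → C(Y, ℂ))
    (hΔ : ∀ f : C(X, ℂ), piRho (Δ f) = T (piRho f) ∧ Δ f w₀ = f u₀) :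
    TwoLocalDiamPreserving Δ := by
  intro f g
  obtain ⟨S, hSsurj, hSiso, hSf, hSg⟩ := hT (piRho f) (piRho g)
  obtain ⟨σ, hσ⟩ := (constFuns Y).mkQ.exists_rightInverse_of_surjective
    (LinearMap.range_eq_top.mpr (Submodule.mkQ_surjective _))
  have hσ' : ∀ u : Crho Y, piRho (σ u) = u := by
    intro u
    have := congrArg (fun (L : Crho Y →ₗ[ℂ] Crho Y) => L u) hσ
    simpa [piRho] using this
  set A : C(X, ℂ) →ₗ[ℂ] C(Y, ℂ) := σ ∘ₗ S ∘ₗ piRho with hA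
  let Tt : C(X, ℂ) →ₗ[ℂ] C(Y, ℂ) :=
    { toFun := fun h => A h + (h u₀ - A h w₀) • 1
      map_add' := by
        intro a b
        ext y
        simp only [map_add, ContinuousMap.add_apply, ContinuousMap.smul_apply,
          ContinuousMap.one_apply, smul_eq_mul, mul_one]
        ring
      map_smul' := by
        intro c a
        ext y
        simp only [map_smul, ContinuousMap.add_apply, ContinuousMap.smul_apply,
          ContinuousMap.one_apply, smul_eq_mul, mul_one, RingHom.id_apply]
        ring }
  have hπTt : ∀ h, piRho (Tt h) = S (piRho h) := by
    intro h
    show piRho (A h + (h u₀ - A h w₀) • 1) = _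
    rw [map_add, map_smul, piRho_one, smul_zero, add_zero, hA]
    exact hσ' _
  refine ⟨Tt, ?_, ?_, ?_, ?_⟩
  · -- bijective
    constructor
    · -- injective
      intro a b hab
      have hsub : Tt (a - b) = 0 := by rw [map_sub, hab, sub_self]
      have h1 : S (piRho (a - b)) = 0 := by rw [← hπTt, hsub, map_zero]
      have h2 : rhoNorm (piRho (a - b)) = 0 := by
        rw [← hSiso, h1]
        have hz : rhoNorm (0 : Crho Y) = cdiam (0 : C(Y, ℂ)) := by
          rw [← (piRho : C(Y, ℂ) →ₗ[ℂ] Crho Y).map_zero, rhoNorm_piRho]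
        rw [hz]
        unfold cdiam
        simp
      rw [rhoNorm_piRho] at h2
      have hmem : a - b ∈ constFuns X := cdiam_zero_mem _ u₀ h2
      obtain ⟨c, hc⟩ := Submodule.mem_span_singleton.mp hmem
      have hπ0 : piRho (a - b) = 0 := (Submodule.Quotient.mk_eq_zero _).mpr hmem
      have hA0 : A (a - b) = 0 := by
        rw [hA]; show σ (S (piRho (a - b))) = 0; rw [hπ0, map_zero, map_zero]
      have hTsub : Tt (a - b) = ((a - b) u₀ - 0) • 1 := by
        show A (a - b) + ((a - b) u₀ - A (a - b) w₀) • 1 = _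
        rw [hA0]; simp
      rw [hsub] at hTsub
      have hc0 : (a - b) u₀ = 0 := by
        have := congrArg (fun (k : C(Y, ℂ)) => k w₀) hTsub
        simpa using this.symm
      have : ∀ x, (a - b) x = (a - b) u₀ := by
        intro x
        have hx := congrArg (fun (k : C(X, ℂ)) => k x) hc
        have hu := congrArg (fun (k : C(X, ℂ)) => k u₀) hc
        simp only [ContinuousMap.smul_apply, ContinuousMap.one_apply, smul_eq_mul,
          mul_one] at hx hu
        rw [← hx, ← hu]
      have : a - b = 0 := by
        ext x
        simpa [hc0] using (this x).trans hc0
      exact sub_eq_zero.mp (by simpa using this)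
    · -- surjective
      intro k
      obtain ⟨w, hw⟩ := hSsurj (piRho k)
      obtain ⟨h, rfl⟩ := Submodule.mkQ_surjective (constFuns X) w
      have hπ : piRho (Tt h - k) = 0 := by
        rw [map_sub, hπTt]
        show S (piRho h) - piRho k = 0
        rw [show (Submodule.mkQ (constFuns X)) h = piRho h from rfl] at hw
        rw [hw, sub_self]
      have hmem : Tt h - k ∈ constFuns Y := (Submodule.Quotient.mk_eq_zero _).mp hπ
      obtain ⟨c, hc⟩ := Submodule.mem_span_singleton.mp hmem
      refine ⟨h - c • 1, ?_⟩
      have hT1 : Tt (1 : C(X, ℂ)) = 1 := by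
        show A 1 + ((1 : C(X,ℂ)) u₀ - A 1 w₀) • 1 = 1
        have hA1 : A (1 : C(X, ℂ)) = 0 := by
          rw [hA]; show σ (S (piRho 1)) = 0; rw [piRho_one, map_zero, map_zero]
        rw [hA1]; simp
      rw [map_sub, map_smul, hT1]
      ext y
      have hy := congrArg (fun (m : C(Y, ℂ)) => m y) hc
      simp only [ContinuousMap.smul_apply, ContinuousMap.one_apply, smul_eq_mul, mul_one,
        ContinuousMap.sub_apply] at hy ⊢
      linear_combination -hy
  · -- diameter preserving
    intro a b
    have : Tt a - Tt b = Tt (a - b) := (map_sub Tt a b).symm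
    rw [show Tt a - Tt b = Tt (a - b) from this]
    calc cdiam (Tt (a - b)) = rhoNorm (piRho (Tt (a - b))) := (rhoNorm_piRho _).symm
    _ = rhoNorm (S (piRho (a - b))) := by rw [hπTt]
    _ = rhoNorm (piRho (a - b)) := hSiso _
    _ = cdiam (a - b) := rhoNorm_piRho _
  · -- agrees at f
    show A f + (f u₀ - A f w₀) • 1 = Δ f
    have hπΔ : piRho (Δ f) = S (piRho f) := by rw [(hΔ f).1, hSf]
    have hmem : A f - Δ f ∈ constFuns Y := by
      apply (Submodule.Quotient.mk_eq_zero _).mp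
      show piRho (A f - Δ f) = 0
      have hAv : piRho (A f) = S (piRho f) := hσ' (S (piRho f))
      rw [map_sub, hπΔ, hAv, sub_self]
    obtain ⟨c, hc⟩ := Submodule.mem_span_singleton.mp hmem
    ext y
    have hy := congrArg (fun (m : C(Y, ℂ)) => m y) hc
    have hw := congrArg (fun (m : C(Y, ℂ)) => m w₀) hc
    simp only [ContinuousMap.smul_apply, ContinuousMap.one_apply, smul_eq_mul, mul_one,
      ContinuousMap.sub_apply] at hy hw
    have hΔw : Δ f w₀ = f u₀ := (hΔ f).2
    simp only [ContinuousMap.add_apply, ContinuousMap.smul_apply, ContinuousMap.one_apply,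
      smul_eq_mul, mul_one]
    linear_combination -hy + hw - hΔw
  · -- agrees at g
    show A g + (g u₀ - A g w₀) • 1 = Δ g
    have hπΔ : piRho (Δ g) = S (piRho g) := by rw [(hΔ g).1, hSg]
    have hmem : A g - Δ g ∈ constFuns Y := by
      apply (Submodule.Quotient.mk_eq_zero _).mp
      show piRho (A g - Δ g) = 0
      have hAv : piRho (A g) = S (piRho g) := hσ' (S (piRho g))
      rw [map_sub, hπΔ, hAv, sub_self]
    obtain ⟨c, hc⟩ := Submodule.mem_span_singleton.mp hmem
    ext y
    have hy := congrArg (fun (m : C(Y, ℂ)) => m y) hc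
    have hw := congrArg (fun (m : C(Y, ℂ)) => m w₀) hc
    simp only [ContinuousMap.smul_apply, ContinuousMap.one_apply, smul_eq_mul, mul_one,
      ContinuousMap.sub_apply] at hy hw
    have hΔw : Δ g w₀ = g u₀ := (hΔ g).2
    simp only [ContinuousMap.add_apply, ContinuousMap.smul_apply, ContinuousMap.one_apply,
      smul_eq_mul, mul_one]
    linear_combination -hy + hw - hΔw
end
end

section
/- Let X and Y be first countable compact Hausdorff spaces, each with at least two points, and let Δ : C(X) → C(Y) be a 2-local diameter-preserving map. Fix (x₁, x₂) ∈ X̃ and let h ∈ C(X) be a continuous function with values in [0,1] such that h⁻¹({1}) = {x₁} and h⁻¹({0}) = {x₂}. Then for every f ∈ C(X) the set B_{(x₁,x₂),f} is a nonempty closed subset of Ỹ × 𝕋, and B_{(x₁,x₂),h} ⊆ B_{(x₁,x₂),f} for every f ∈ C(X). -/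
/-!
A functional `ψ` on `C(X)` with `|ψ g| ≤ ρ(g)` kills the constants. If moreover `|ψ h| = 1` for
a function `h` whose diameter `1` is attained only at the pair `(x₁, x₂)`, then `ψ` vanishes on
every `f` with `f x₁ = f x₂ = 0`: such an `f` is small near `x₁` and `x₂`, while away from them
`h` stays a fixed distance below its diameter, so `ρ(h + t f) ≤ 1 + o(t)` as `t → 0⁺`, whereas a
suitable rotation of `f` makes `|ψ (h + t f)|` grow like `1 + t |ψ f|²`. Hence
`ψ f = ψ h · (f x₁ - f x₂)` for all `f`.

For `((y₁, y₂), μ) ∈ B_h`, apply this to `ψ g = T g y₁ - T g y₂`, where `T` is the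
diameter-preserving linear bijection agreeing with `Δ` at `f` and `h`: it gives `B_h ⊆ B_f`.
`B_h` is nonempty because `Δ h` has diameter `ρ(h) = 1`, attained at some pair of points of the
compact space `Y`.
-/

noncomputable section

/-- The set `B_{(x₁,x₂),f} = {((y₁,y₂),λ) ∈ Ỹ × 𝕋 : Δ(f)(y₁) - Δ(f)(y₂) = λ(f(x₁) - f(x₂))}`. -/
def Bset {X Y : Type*} [TopologicalSpace X] [TopologicalSpace Y]
    (Δ : C(X, ℂ) → C(Y, ℂ)) (x₁ x₂ : X) (f : C(X, ℂ)) : Set ((Y × Y) × ℂ) :=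
  {p | p.1.1 ≠ p.1.2 ∧ ‖p.2‖ = 1 ∧
    Δ f p.1.1 - Δ f p.1.2 = p.2 * (f x₁ - f x₂)}

open ContinuousMap

section Diameter

variable {X : Type*} [TopologicalSpace X]

lemma cdiam_le_of_forall {g : C(X, ℂ)} {C : ℝ} (hC : 0 ≤ C) (hg : ∀ u v, ‖g u - g v‖ ≤ C) :
    cdiam g ≤ C :=
  Real.iSup_le (fun p => hg p.1 p.2) hC

lemma cdiam_const (c : ℂ) : cdiam (const X c) = 0 :=
  le_antisymm (cdiam_le_of_forall le_rfl (by simp)) (Real.iSup_nonneg fun _ => norm_nonneg _)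

variable [CompactSpace X]

lemma norm_sub_le_cdiam (g : C(X, ℂ)) (u v : X) : ‖g u - g v‖ ≤ cdiam g := by
  refine le_ciSup_of_le ⟨2 * ‖g‖, ?_⟩ (u, v) le_rfl
  rintro _ ⟨p, rfl⟩
  calc ‖g p.1 - g p.2‖ ≤ ‖g p.1‖ + ‖g p.2‖ := norm_sub_le _ _
    _ ≤ 2 * ‖g‖ := by linarith [g.norm_coe_le_norm p.1, g.norm_coe_le_norm p.2]

lemma exists_cdiam_eq [Nonempty X] (g : C(X, ℂ)) : ∃ u v : X, cdiam g = ‖g u - g v‖ := by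
  obtain ⟨p, -, hp⟩ := isCompact_univ.exists_isMaxOn Set.univ_nonempty
    (show Continuous fun p : X × X => ‖g p.1 - g p.2‖ by fun_prop).continuousOn
  exact ⟨p.1, p.2, le_antisymm (cdiam_le_of_forall (norm_nonneg _) fun u v =>
    hp (Set.mem_univ (u, v))) (norm_sub_le_cdiam g p.1 p.2)⟩

end Diameter

structure IsDiamPeak {X : Type*} [TopologicalSpace X] (h : C(X, ℂ)) (x₁ x₂ : X) : Prop where
  apply_left : h x₁ = 1
  apply_right : h x₂ = 0
  norm_sub_le_one : ∀ u v, ‖h u - h v‖ ≤ 1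
  norm_sub_lt_one : ∀ u v, u ≠ x₁ → u ≠ x₂ → ‖h u - h v‖ < 1

lemma isDiamPeak_of_mem_unitInterval {X : Type*} [TopologicalSpace X] {x₁ x₂ : X}
    {h : C(X, ℂ)} (hval : ∀ x, ∃ t : ℝ, 0 ≤ t ∧ t ≤ 1 ∧ h x = t)
    (h1 : ⇑h ⁻¹' {1} = {x₁}) (h0 : ⇑h ⁻¹' {0} = {x₂}) : IsDiamPeak h x₁ x₂ := by
  have norm_sub_eq {u v : X} {a b : ℝ} (ha : h u = a) (hb : h v = b) : ‖h u - h v‖ = |a - b| := by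
    rw [ha, hb, ← Complex.ofReal_sub, Complex.norm_real, Real.norm_eq_abs]
  refine ⟨(h1.symm ▸ rfl : x₁ ∈ ⇑h ⁻¹' {1}), (h0.symm ▸ rfl : x₂ ∈ ⇑h ⁻¹' {0}), ?_, ?_⟩
  · intro u v
    obtain ⟨a, ha0, ha1, ha⟩ := hval u
    obtain ⟨b, hb0, hb1, hb⟩ := hval v
    rw [norm_sub_eq ha hb, abs_le]
    constructor <;> linarith
  · intro u v hu₁ hu₂
    obtain ⟨a, ha0, ha1, ha⟩ := hval u
    obtain ⟨b, hb0, hb1, hb⟩ := hval v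
    have ha_lt : a < 1 := ha1.lt_of_ne fun ha_eq =>
      hu₁ (by rw [← Set.mem_singleton_iff, ← h1]; simp [ha, ha_eq])
    have ha_pos : 0 < a := ha0.lt_of_ne fun ha_eq =>
      hu₂ (by rw [← Set.mem_singleton_iff, ← h0]; simp [ha, ← ha_eq])
    rw [norm_sub_eq ha hb, abs_lt]
    constructor <;> linarith

namespace IsDiamPeak

variable {X : Type*} [TopologicalSpace X] [CompactSpace X] {h : C(X, ℂ)} {x₁ x₂ : X}

lemma cdiam_eq_one (hh : IsDiamPeak h x₁ x₂) : cdiam h = 1 :=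
  le_antisymm (cdiam_le_of_forall zero_le_one hh.norm_sub_le_one) <| by
    simpa [hh.apply_left, hh.apply_right] using norm_sub_le_cdiam h x₁ x₂

lemma exists_norm_sub_le_one_sub (hh : IsDiamPeak h x₁ x₂) {K : Set X} (hK : IsClosed K)
    (hx₁ : x₁ ∉ K) (hx₂ : x₂ ∉ K) :
    ∃ δ > 0, ∀ u v, u ∈ K ∨ v ∈ K → ‖h u - h v‖ ≤ 1 - δ := by
  have hS : IsCompact (K ×ˢ Set.univ ∪ Set.univ ×ˢ K : Set (X × X)) :=
    (hK.isCompact.prod isCompact_univ).union (isCompact_univ.prod hK.isCompact)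
  have hpos : ∀ p ∈ K ×ˢ Set.univ ∪ Set.univ ×ˢ K, 0 < 1 - ‖h p.1 - h p.2‖ := by
    rintro ⟨u, v⟩ (⟨hu, -⟩ | ⟨-, hv⟩)
    · exact sub_pos.2 <| hh.norm_sub_lt_one u v (ne_of_mem_of_not_mem hu hx₁)
        (ne_of_mem_of_not_mem hu hx₂)
    · rw [norm_sub_rev]
      exact sub_pos.2 <| hh.norm_sub_lt_one v u (ne_of_mem_of_not_mem hv hx₁)
        (ne_of_mem_of_not_mem hv hx₂)
  obtain ⟨δ, hδ, hδS⟩ := hS.exists_forall_le' (by fun_prop) hpos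
  refine ⟨δ, hδ, fun u v huv => ?_⟩
  have := hδS (u, v) (huv.imp (fun hu => ⟨hu, trivial⟩) fun hv => ⟨trivial, hv⟩)
  linarith

lemma exists_cdiam_add_smul_le (hh : IsDiamPeak h x₁ x₂) {f : C(X, ℂ)} (hf₁ : f x₁ = 0)
    (hf₂ : f x₂ = 0) {η : ℝ} (hη : 0 < η) :
    ∃ t : ℝ, 0 < t ∧ cdiam (h + (t : ℂ) • f) ≤ 1 + t * η := by
  set K := {u | η / 2 ≤ ‖f u‖}
  have hK : IsClosed K := isClosed_le continuous_const (by fun_prop)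
  have hxK {x : X} (hx : f x = 0) : x ∉ K := by simp [K, hx, hη]
  obtain ⟨δ, hδ, hδK⟩ := hh.exists_norm_sub_le_one_sub hK (hxK hf₁) (hxK hf₂)
  set M := ‖f‖
  set t := δ / (2 * M + 1)
  have ht : 0 < t := by positivity
  have htM : t * (2 * M) ≤ δ := by
    have : t * (2 * M + 1) = δ := div_mul_cancel₀ δ (by positivity)
    nlinarith
  refine ⟨t, ht, cdiam_le_of_forall (by positivity) fun u v => ?_⟩
  have htri : ‖(h + (t : ℂ) • f) u - (h + (t : ℂ) • f) v‖ ≤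
      ‖h u - h v‖ + t * (‖f u‖ + ‖f v‖) := by
    simp only [ContinuousMap.add_apply, ContinuousMap.smul_apply, smul_eq_mul]
    calc ‖h u + t * f u - (h v + t * f v)‖ = ‖(h u - h v) + t * (f u - f v)‖ := by ring_nf
      _ ≤ ‖h u - h v‖ + t * ‖f u - f v‖ := (norm_add_le _ _).trans_eq <| by
        rw [norm_mul, Complex.norm_real, Real.norm_of_nonneg ht.le]
      _ ≤ ‖h u - h v‖ + t * (‖f u‖ + ‖f v‖) := by gcongr; exact norm_sub_le _ _
  have htη := mul_pos ht hη
  by_cases huv : u ∈ K ∨ v ∈ K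
  · have : t * (‖f u‖ + ‖f v‖) ≤ t * (2 * M) := by
      gcongr; linarith [f.norm_coe_le_norm u, f.norm_coe_le_norm v]
    linarith [hδK u v huv]
  · have hu : ‖f u‖ < η / 2 := lt_of_not_ge fun hu => huv (.inl hu)
    have hv : ‖f v‖ < η / 2 := lt_of_not_ge fun hv => huv (.inr hv)
    have : t * (‖f u‖ + ‖f v‖) ≤ t * η := by gcongr; linarith
    linarith [hh.norm_sub_le_one u v]

variable {ψ : C(X, ℂ) →ₗ[ℂ] ℂ}

lemma map_eq_zero_of_norm_le_cdiam (hh : IsDiamPeak h x₁ x₂) (hψ : ∀ g, ‖ψ g‖ ≤ cdiam g)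
    (hψh : ‖ψ h‖ = 1) {f : C(X, ℂ)} (hf₁ : f x₁ = 0) (hf₂ : f x₂ = 0) : ψ f = 0 := by
  by_contra hc
  set c := ψ f
  set f' := (ψ h * starRingEnd ℂ c) • f
  have hc2 : 0 < ‖c‖ ^ 2 := by positivity
  obtain ⟨t, ht, hdiam⟩ :=
    hh.exists_cdiam_add_smul_le (f := f') (by simp [f', hf₁]) (by simp [f', hf₂]) (half_pos hc2)
  have hmap : ψ (h + (t : ℂ) • f') = ψ h * ((1 + t * ‖c‖ ^ 2 : ℝ) : ℂ) := by
    simp only [f', map_add, map_smul, smul_eq_mul]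
    push_cast
    linear_combination (t : ℂ) * ψ h * Complex.conj_mul' c
  have := hψ (h + (t : ℂ) • f')
  rw [hmap, norm_mul, hψh, one_mul, Complex.norm_real, Real.norm_of_nonneg (by positivity)] at this
  nlinarith

lemma map_eq_mul_sub (hh : IsDiamPeak h x₁ x₂) (hψ : ∀ g, ‖ψ g‖ ≤ cdiam g) (hψh : ‖ψ h‖ = 1)
    (f : C(X, ℂ)) : ψ f = ψ h * (f x₁ - f x₂) := by
  have hconst (c : ℂ) : ψ (const X c) = 0 :=
    norm_le_zero_iff.1 <| (hψ _).trans_eq (cdiam_const c)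
  have := hh.map_eq_zero_of_norm_le_cdiam hψ hψh (f := f - (f x₁ - f x₂) • h - const X (f x₂))
    (by simp [hh.apply_left]) (by simp [hh.apply_right])
  rw [map_sub, map_sub, map_smul, hconst, smul_eq_mul] at this
  linear_combination this

end IsDiamPeak

lemma DiamPreserving.cdiam_map {X Y : Type*} [TopologicalSpace X] [TopologicalSpace Y]
    {T : C(X, ℂ) →ₗ[ℂ] C(Y, ℂ)} (hT : DiamPreserving T) (g : C(X, ℂ)) :
    cdiam (T g) = cdiam g := by
  simpa using hT g 0

section Bset

variable {X Y : Type*} [TopologicalSpace X] [TopologicalSpace Y] {Δ : C(X, ℂ) → C(Y, ℂ)}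
  {h : C(X, ℂ)} {x₁ x₂ : X}

lemma Bset_subset_of_isDiamPeak [CompactSpace X] [CompactSpace Y]
    (hΔ : TwoLocalDiamPreserving Δ) (hh : IsDiamPeak h x₁ x₂) (f : C(X, ℂ)) :
    Bset Δ x₁ x₂ h ⊆ Bset Δ x₁ x₂ f := by
  rintro ⟨⟨y₁, y₂⟩, μ⟩ ⟨hne, hμ, heq⟩
  obtain ⟨T, -, hT, hTf, hTh⟩ := hΔ f h
  set ψ := (evalCLM ℂ y₁ - evalCLM ℂ y₂ : C(Y, ℂ) →L[ℂ] ℂ).toLinearMap ∘ₗ T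
  have hψ (g : C(X, ℂ)) : ψ g = T g y₁ - T g y₂ := rfl
  have hψh : ψ h = μ := by
    simpa [hψ, hTh, hh.apply_left, hh.apply_right] using heq
  have hbound (g : C(X, ℂ)) : ‖ψ g‖ ≤ cdiam g :=
    (norm_sub_le_cdiam (T g) y₁ y₂).trans_eq (hT.cdiam_map g)
  refine ⟨hne, hμ, ?_⟩
  have := hh.map_eq_mul_sub hbound (hψh ▸ hμ) f
  rwa [hψ, hTf, hψh] at this

lemma Bset_nonempty_of_isDiamPeak [CompactSpace X] [CompactSpace Y] [Nonempty Y]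
    (hΔ : TwoLocalDiamPreserving Δ) (hh : IsDiamPeak h x₁ x₂) : (Bset Δ x₁ x₂ h).Nonempty := by
  obtain ⟨T, -, hT, hTh, -⟩ := hΔ h h
  obtain ⟨y₁, y₂, hy⟩ := exists_cdiam_eq (Δ h)
  rw [← hTh, hT.cdiam_map, hh.cdiam_eq_one, hTh] at hy
  refine ⟨((y₁, y₂), Δ h y₁ - Δ h y₂), fun hy₁₂ => ?_, hy.symm, ?_⟩
  · rw [show y₁ = y₂ from hy₁₂, sub_self, norm_zero] at hy
    exact one_ne_zero hy
  · simp [hh.apply_left, hh.apply_right]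

lemma isClosed_Bset_subtype (Δ : C(X, ℂ) → C(Y, ℂ)) (x₁ x₂ : X) (f : C(X, ℂ)) :
    IsClosed {p : {q : (Y × Y) × ℂ // q.1.1 ≠ q.1.2 ∧ ‖q.2‖ = 1} |
      (p : (Y × Y) × ℂ) ∈ Bset Δ x₁ x₂ f} := by
  have hclosed : IsClosed {q : (Y × Y) × ℂ | Δ f q.1.1 - Δ f q.1.2 = q.2 * (f x₁ - f x₂)} :=
    isClosed_eq (by fun_prop) (by fun_prop)
  convert hclosed.preimage continuous_subtype_val using 1
  exact Set.ext fun p => ⟨fun hp => hp.2.2, fun hp => ⟨p.2.1, p.2.2, hp⟩⟩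

end Bset

theorem Bset_nonempty_closed_and_contains_peak_general
    {X Y : Type*} [TopologicalSpace X] [CompactSpace X]
    [TopologicalSpace Y] [CompactSpace Y]
    (h2Y : ∃ a b : Y, a ≠ b)
    (Δ : C(X, ℂ) → C(Y, ℂ)) (hΔ : TwoLocalDiamPreserving Δ)
    (x₁ x₂ : X) (h : C(X, ℂ))
    (hval : ∀ x, ∃ t : ℝ, 0 ≤ t ∧ t ≤ 1 ∧ h x = t)
    (h1 : ⇑h ⁻¹' {1} = {x₁}) (h0 : ⇑h ⁻¹' {0} = {x₂}) :
    ∀ f : C(X, ℂ),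
      (Bset Δ x₁ x₂ f).Nonempty ∧
      IsClosed {p : {q : (Y × Y) × ℂ // q.1.1 ≠ q.1.2 ∧ ‖q.2‖ = 1} |
        (p : (Y × Y) × ℂ) ∈ Bset Δ x₁ x₂ f} ∧
      Bset Δ x₁ x₂ h ⊆ Bset Δ x₁ x₂ f := by
  intro f
  obtain ⟨y, -⟩ := h2Y
  have : Nonempty Y := ⟨y⟩
  have hh := isDiamPeak_of_mem_unitInterval hval h1 h0
  have hsub := Bset_subset_of_isDiamPeak hΔ hh f
  exact ⟨(Bset_nonempty_of_isDiamPeak hΔ hh).mono hsub, isClosed_Bset_subtype Δ x₁ x₂ f, hsub⟩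

/-- For a 2-local diameter-preserving map `Δ` and a peaking function `h` for `(x₁, x₂)`, each
`B_{(x₁,x₂),f}` is a nonempty closed subset of `Ỹ × 𝕋`, and `B_{(x₁,x₂),h} ⊆ B_{(x₁,x₂),f}`
for every `f`. -/
theorem Bset_nonempty_closed_and_contains_peak
    {X Y : Type*} [TopologicalSpace X] [CompactSpace X] [T2Space X] [FirstCountableTopology X]
    [TopologicalSpace Y] [CompactSpace Y] [T2Space Y] [FirstCountableTopology Y]
    (h2X : ∃ a b : X, a ≠ b) (h2Y : ∃ a b : Y, a ≠ b)
    (Δ : C(X, ℂ) → C(Y, ℂ)) (hΔ : TwoLocalDiamPreserving Δ)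
    (x₁ x₂ : X) (hx : x₁ ≠ x₂) (h : C(X, ℂ))
    (hval : ∀ x, ∃ t : ℝ, 0 ≤ t ∧ t ≤ 1 ∧ h x = t)
    (h1 : ⇑h ⁻¹' {1} = {x₁}) (h0 : ⇑h ⁻¹' {0} = {x₂}) :
    ∀ f : C(X, ℂ),
      (Bset Δ x₁ x₂ f).Nonempty ∧
      IsClosed {p : {q : (Y × Y) × ℂ // q.1.1 ≠ q.1.2 ∧ ‖q.2‖ = 1} |
        (p : (Y × Y) × ℂ) ∈ Bset Δ x₁ x₂ f} ∧
      Bset Δ x₁ x₂ h ⊆ Bset Δ x₁ x₂ f :=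
  Bset_nonempty_closed_and_contains_peak_general h2Y Δ hΔ x₁ x₂ h hval h1 h0
end
end

section
/- Let X and Y be first countable compact Hausdorff spaces, each with at least two points, and let Δ : C(X) → C(Y) be a 2-local diameter-preserving map. Then for every (x₁, x₂) ∈ X̃, the set B_{(x₁,x₂)} = ⋂_{f ∈ C(X)} B_{(x₁,x₂),f} is nonempty. -/
set_option linter.unusedSectionVars false
set_option maxHeartbeats 1000000

noncomputable section


section Auxiliary

open Set Filter Topology



section CdiamBasic
variable {Z : Type*} [TopologicalSpace Z] [CompactSpace Z] [Nonempty Z]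

lemma bddAbove_cdiam (g : C(Z, ℂ)) :
    BddAbove (Set.range fun p : Z × Z => ‖g p.1 - g p.2‖) := by
  refine ⟨2 * ‖g‖, ?_⟩
  rintro - ⟨p, rfl⟩
  have h1 : ‖g p.1‖ ≤ ‖g‖ := g.norm_coe_le_norm p.1
  have h2 : ‖g p.2‖ ≤ ‖g‖ := g.norm_coe_le_norm p.2
  calc ‖g p.1 - g p.2‖ = ‖g p.1 - g p.2‖ := rfl
    _ ≤ ‖g p.1‖ + ‖g p.2‖ := norm_sub_le _ _
    _ ≤ 2 * ‖g‖ := by linarith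

lemma le_cdiam (g : C(Z, ℂ)) (a b : Z) : ‖g a - g b‖ ≤ cdiam g :=
  le_ciSup (bddAbove_cdiam g) (a, b)

lemma cdiam_le (g : C(Z, ℂ)) {c : ℝ} (hc : ∀ a b : Z, ‖g a - g b‖ ≤ c) :
    cdiam g ≤ c :=
  ciSup_le fun p => hc p.1 p.2

lemma exists_cdiam_attained (g : C(Z, ℂ)) : ∃ a b : Z, ‖g a - g b‖ = cdiam g := by
  have hc : Continuous (fun p : Z × Z => ‖g p.1 - g p.2‖) :=
    (continuous_norm).comp ((g.continuous.comp continuous_fst).sub (g.continuous.comp continuous_snd))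
  obtain ⟨p, -, hp⟩ := isCompact_univ.exists_isMaxOn Set.univ_nonempty hc.continuousOn
  rw [isMaxOn_iff] at hp
  have hmax : ∀ a b : Z, ‖g a - g b‖ ≤ ‖g p.1 - g p.2‖ :=
    fun a b => hp (a, b) (Set.mem_univ _)
  exact ⟨p.1, p.2, le_antisymm (le_cdiam g p.1 p.2) (cdiam_le g hmax)⟩

end CdiamBasic


section PeakFun


variable {X : Type*} [TopologicalSpace X] [CompactSpace X] [T2Space X]
  [FirstCountableTopology X]

/-- In a compact Hausdorff first-countable space, every point is the exact zero set of a
nonnegative continuous function. -/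
lemma exists_zero_set_fun (x : X) :
    ∃ g : C(X, ℝ), (∀ a, 0 ≤ g a) ∧ g x = 0 ∧ (∀ a, g a = 0 → a = x) := by
  obtain ⟨U, hU⟩ := (𝓝 x).exists_antitone_basis
  have hdisj : ∀ n : ℕ, Disjoint ({x} : Set X) (interior (U n))ᶜ := by
    intro n
    rw [Set.disjoint_left]
    rintro a rfl ha
    exact ha (mem_interior_iff_mem_nhds.2 (hU.mem n))
  choose G hG0 hG1 hG01 using fun n : ℕ =>
    exists_continuous_zero_one_of_isClosed isClosed_singleton
      (isClosed_compl_iff.2 isOpen_interior) (hdisj n)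
  have hGnorm : ∀ n, ‖G n‖ ≤ 1 := by
    intro n
    rw [ContinuousMap.norm_le _ zero_le_one]
    intro a
    rw [Real.norm_eq_abs, abs_le]
    constructor <;> [linarith [(hG01 n a).1]; exact (hG01 n a).2]
  set F : ℕ → C(X, ℝ) := fun n => (1 / 2 : ℝ) ^ n • G n with hF
  have hFsum : Summable F := by
    apply Summable.of_norm
    apply Summable.of_nonneg_of_le (fun n => norm_nonneg _) (fun n => ?_)
      (summable_geometric_of_lt_one (by norm_num) (by norm_num : (1/2 : ℝ) < 1))
    rw [hF]
    rw [ContinuousMap.norm_le _ (by positivity)]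
    intro a
    have h1 : ((1 / 2 : ℝ) ^ n • G n) a = (1/2 : ℝ)^n * G n a := by
      simp
    rw [h1, Real.norm_eq_abs, abs_mul, abs_of_nonneg (by positivity : (0:ℝ) ≤ (1/2:ℝ)^n)]
    have h2 : |G n a| ≤ 1 := by
      rw [abs_le]; exact ⟨by linarith [(hG01 n a).1], (hG01 n a).2⟩
    nlinarith [pow_pos (by norm_num : (0:ℝ) < 1/2) n]
  refine ⟨∑' n, F n, ?_, ?_, ?_⟩
  · intro a
    rw [← ContinuousMap.tsum_apply hFsum]
    refine tsum_nonneg fun n => ?_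
    have : F n a = (1/2 : ℝ)^n * G n a := by simp [hF]
    rw [this]
    exact mul_nonneg (by positivity) (hG01 n a).1
  · rw [← ContinuousMap.tsum_apply hFsum]
    have hz : ∀ n : ℕ, F n x = 0 := by
      intro n
      have : G n x = 0 := hG0 n rfl
      simp [hF, this]
    simp only [hz]
    exact tsum_zero
  · intro a ha
    by_contra hax
    obtain ⟨A, B, hAo, hBo, hxA, haB, hAB⟩ := t2_separation (Ne.symm hax)
    have hA : A ∈ 𝓝 x := hAo.mem_nhds hxA
    obtain ⟨n, -, hn⟩ := hU.toHasBasis.mem_iff.1 hA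
    have haU : a ∉ interior (U n) := by
      intro h
      have : a ∈ A := hn (interior_subset h)
      exact (Set.disjoint_left.1 hAB this) haB
    have hGa : G n a = 1 := hG1 n haU
    have hFsum' : Summable (fun m => F m a) := by
      have := hFsum.map (ContinuousMap.evalCLM ℝ a).toLinearMap
        (ContinuousMap.evalCLM ℝ a).continuous
      exact this
    have hle : F n a ≤ ∑' m, F m a := by
      refine Summable.le_tsum hFsum' n (fun m _ => ?_)
      have : F m a = (1/2 : ℝ)^m * G m a := by simp [hF]
      rw [this]
      exact mul_nonneg (by positivity) (hG01 m a).1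
    rw [ContinuousMap.tsum_apply hFsum, ha] at hle
    have : F n a = (1/2 : ℝ)^n * G n a := by simp [hF]
    rw [this, hGa, mul_one] at hle
    exact absurd hle (not_le.2 (by positivity))

/-- A "peak" function: `h : X → [0,1]` with `h⁻¹(1) = {x₁}` and `h⁻¹(0) = {x₂}`. -/
lemma exists_peak_fun (x₁ x₂ : X) (hx : x₁ ≠ x₂) :
    ∃ h : C(X, ℝ), (∀ a, 0 ≤ h a ∧ h a ≤ 1) ∧ h x₁ = 1 ∧ h x₂ = 0 ∧
      (∀ a, h a = 1 → a = x₁) ∧ (∀ a, h a = 0 → a = x₂) := by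
  obtain ⟨g₁, hg₁0, hg₁x, hg₁z⟩ := exists_zero_set_fun x₁
  obtain ⟨g₂, hg₂0, hg₂x, hg₂z⟩ := exists_zero_set_fun x₂
  have hpos : ∀ a, 0 < g₁ a + g₂ a := by
    intro a
    rcases lt_or_eq_of_le (hg₁0 a) with h1 | h1
    · linarith [hg₂0 a]
    rcases lt_or_eq_of_le (hg₂0 a) with h2 | h2
    · linarith
    exact absurd ((hg₁z a h1.symm).symm.trans (hg₂z a h2.symm)) hx
  refine ⟨⟨fun a => g₂ a / (g₁ a + g₂ a),
    g₂.continuous.div (g₁.continuous.add g₂.continuous) (fun a => (hpos a).ne')⟩,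
    ?_, ?_, ?_, ?_, ?_⟩
  · intro a
    constructor
    · exact div_nonneg (hg₂0 a) (hpos a).le
    · show g₂ a / (g₁ a + g₂ a) ≤ 1
      rw [div_le_one (hpos a)]; linarith [hg₁0 a]
  · show g₂ x₁ / (g₁ x₁ + g₂ x₁) = 1
    rw [hg₁x, zero_add, div_self]
    intro h0
    exact hx ((hg₂z x₁ h0).symm ▸ rfl)
  · show g₂ x₂ / (g₁ x₂ + g₂ x₂) = 0
    rw [hg₂x, zero_div]
  · intro a ha
    have ha' : g₂ a / (g₁ a + g₂ a) = 1 := ha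
    rw [div_eq_one_iff_eq (hpos a).ne'] at ha'
    exact hg₁z a (by linarith)
  · intro a ha
    have ha' : g₂ a / (g₁ a + g₂ a) = 0 := ha
    rw [div_eq_zero_iff] at ha'
    rcases ha' with h | h
    · exact hg₂z a h
    · exact absurd h (hpos a).ne'

end PeakFun


lemma abs_one_add_le {u : ℂ} (hu : ‖u‖ ≤ 1/2) :
    ‖1 + u‖ ≤ 1 + u.re + (‖u‖)^2 := by
  have e1 : (‖1+u‖)^2 = Complex.normSq (1+u) := Complex.sq_norm _
  have e2 : Complex.normSq (1+u) = 1 + 2*u.re + Complex.normSq u := by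
    simp [Complex.normSq_apply, Complex.add_re, Complex.add_im]; ring
  have e3 : Complex.normSq u = (‖u‖)^2 := (Complex.sq_norm u).symm
  have h4 : |u.re| ≤ ‖u‖ := Complex.abs_re_le_norm u
  have h5 : (0:ℝ) ≤ ‖1+u‖ := norm_nonneg _
  have h6 : (0:ℝ) ≤ ‖u‖ := norm_nonneg _
  have h7 : -(1/2 : ℝ) ≤ u.re := by
    have := (abs_le.1 h4).1; linarith
  have hB : (0:ℝ) ≤ 1 + u.re + (‖u‖)^2 := by nlinarith [sq_nonneg (‖u‖)]
  have hsq : (‖1+u‖)^2 ≤ (1 + u.re + (‖u‖)^2)^2 := by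
    nlinarith [mul_nonneg (sq_nonneg (‖u‖)) (by linarith : (0:ℝ) ≤ 1 + 2*u.re),
      sq_nonneg u.re, sq_nonneg ((‖u‖)^2)]
  exact (pow_le_pow_iff_left₀ h5 hB two_ne_zero).1 hsq

/-- If `|1 + t w| ≤ |1 + t z| + δ|t|` for all small `t` and every `δ > 0`, then `w = z`. -/
lemma forces_eq {z w : ℂ}
    (H : ∀ δ : ℝ, 0 < δ → ∃ t₀ : ℝ, 0 < t₀ ∧ ∀ t : ℂ, ‖t‖ ≤ t₀ →
      ‖1 + t*w‖ ≤ ‖1 + t*z‖ + δ * ‖t‖) :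
    w = z := by
  by_contra hwz
  set d : ℂ := w - z with hd
  have hd0 : d ≠ 0 := sub_ne_zero.2 hwz
  have habsd : (0:ℝ) < ‖d‖ := by
    simpa using norm_pos_iff.mpr hd0
  set e : ℂ := (starRingEnd ℂ) d / (‖d‖ : ℂ) with he
  have habse : ‖e‖ = 1 := by
    rw [he, norm_div]
    simp [Complex.norm_conj, Complex.norm_real, Real.norm_eq_abs, abs_of_pos habsd, div_self habsd.ne']
  have hed : (e * d) = ((‖d‖ : ℝ) : ℂ) := by
    rw [he, div_mul_eq_mul_div, Complex.conj_mul', sq,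
      mul_div_assoc, div_self (by exact_mod_cast habsd.ne' : (‖d‖ : ℂ) ≠ 0), mul_one]
  obtain ⟨t₀, ht₀, hH⟩ := H (‖d‖ / 2) (by linarith)
  set r : ℝ := min t₀ (min (‖d‖ / (4 * ((‖z‖)^2 + 1)))
    (1 / (2 * (‖z‖ + 1)))) with hr
  have hz0 : (0:ℝ) ≤ ‖z‖ := norm_nonneg _
  have hr0 : 0 < r := lt_min ht₀ (lt_min (by positivity) (by positivity))
  set t : ℂ := (r : ℂ) * e with ht
  have habst : ‖t‖ = r := by
    rw [ht, norm_mul, habse, mul_one, Complex.norm_real, Real.norm_eq_abs, abs_of_pos hr0]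
  have h1 := hH t (by rw [habst]; exact min_le_left _ _)
  have hLre : (1 + t*w).re = 1 + r * (e*w).re := by
    rw [ht, mul_assoc, Complex.add_re, Complex.one_re, Complex.re_ofReal_mul]
  have hL : 1 + r * (e*w).re ≤ ‖1 + t*w‖ := by
    rw [← hLre]; exact Complex.re_le_norm _
  have hrle : r ≤ 1 / (2 * (‖z‖ + 1)) :=
    le_trans (min_le_right _ _) (min_le_right _ _)
  have habstz : ‖t*z‖ ≤ 1/2 := by
    rw [norm_mul, habst]
    have h6 : r * (2*(‖z‖ + 1)) ≤ 1 := by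
      rw [← le_div_iff₀ (by positivity)]
      simpa [div_eq_mul_inv] using hrle
    nlinarith [h6, hr0, hz0]
  have hUre : (t*z).re = r * (e*z).re := by
    rw [ht, mul_assoc, Complex.re_ofReal_mul]
  have hU : ‖1 + t*z‖ ≤ 1 + r*(e*z).re + r^2*(‖z‖)^2 := by
    have h2 := abs_one_add_le habstz
    rw [hUre, norm_mul, habst, mul_pow] at h2
    exact h2
  have hre : (e*w).re - (e*z).re = ‖d‖ := by
    have h3 : e*w - e*z = e*d := by rw [hd]; ring
    have h4 : (e*w).re - (e*z).re = (e*w - e*z).re := (Complex.sub_re _ _).symm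
    rw [h4, h3, hed, Complex.ofReal_re]
  have hrz : r * (‖z‖)^2 ≤ ‖d‖ / 4 := by
    have h5 : r ≤ ‖d‖ / (4 * ((‖z‖)^2 + 1)) :=
      le_trans (min_le_right _ _) (min_le_left _ _)
    have h5' : r * (4 * ((‖z‖)^2 + 1)) ≤ ‖d‖ := by
      rw [← le_div_iff₀ (by positivity)]
      exact h5
    nlinarith [h5', hr0]
  rw [habst] at h1
  nlinarith [h1, hL, hU, hre, hrz, hr0, habsd,
    mul_le_mul_of_nonneg_left hrz hr0.le, mul_pos hr0 habsd]


end Auxiliary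


section MainIneq

open Set Filter Topology

variable {X : Type*} [TopologicalSpace X] [CompactSpace X] [T2Space X]


/-- Near-maximizers of `h a - h b` must lie in any given neighborhood of `(x₁, x₂)`. -/
lemma peak_nbhd (h : C(X, ℝ)) (x₁ x₂ : X)
    (h01 : ∀ a, 0 ≤ h a ∧ h a ≤ 1)
    (hl1 : ∀ a, h a = 1 → a = x₁) (hl0 : ∀ a, h a = 0 → a = x₂)
    {U V : Set X} (hU : U ∈ 𝓝 x₁) (hV : V ∈ 𝓝 x₂) :
    ∃ ε : ℝ, 0 < ε ∧ ∀ a b : X, 1 - ε ≤ h a - h b → a ∈ U ∧ b ∈ V := by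
  set K : Set (X × X) := (interior U ×ˢ interior V)ᶜ with hK
  have hKcl : IsClosed K := (isOpen_interior.prod isOpen_interior).isClosed_compl
  have hKcp : IsCompact K := hKcl.isCompact
  have hφlt : ∀ p ∈ K, h p.1 - h p.2 < 1 := by
    rintro ⟨a, b⟩ hp
    rcases lt_or_eq_of_le (show h a - h b ≤ 1 by
      linarith [(h01 a).2, (h01 b).1]) with hlt | heq
    · exact hlt
    · exfalso
      have ha : h a = 1 := by linarith [(h01 a).2, (h01 b).1]
      have hb : h b = 0 := by linarith [(h01 a).2, (h01 b).1]
      have : (a, b) ∈ interior U ×ˢ interior V := by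
        refine ⟨?_, ?_⟩
        · rw [hl1 a ha]; exact mem_interior_iff_mem_nhds.2 hU
        · rw [hl0 b hb]; exact mem_interior_iff_mem_nhds.2 hV
      exact hp this
  have hmem : ∀ a b : X, (a, b) ∉ K → a ∈ U ∧ b ∈ V := by
    intro a b hab
    rw [hK, mem_compl_iff, not_not] at hab
    exact ⟨interior_subset hab.1, interior_subset hab.2⟩
  rcases K.eq_empty_or_nonempty with hKe | hKne
  · exact ⟨1/2, by norm_num, fun a b _ => hmem a b (by rw [hKe]; exact notMem_empty _)⟩
  · have hcont : ContinuousOn (fun p : X × X => h p.1 - h p.2) K :=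
      ((h.continuous.comp continuous_fst).sub (h.continuous.comp continuous_snd)).continuousOn
    obtain ⟨p₀, hp₀K, hp₀max⟩ := hKcp.exists_isMaxOn hKne hcont
    rw [isMaxOn_iff] at hp₀max
    set m : ℝ := h p₀.1 - h p₀.2 with hm
    have hm1 : m < 1 := hφlt p₀ hp₀K
    refine ⟨(1 - m)/2, by linarith, fun a b hab => ?_⟩
    refine hmem a b fun habK => ?_
    have := hp₀max (a, b) habK
    simp only at this
    linarith

/-- Convexity bound: for `s ∈ [0,1]` and `|t z| ≤ 1/2`,
`|s + tF| ≤ |1 + tz| + |t| |F - z|`. -/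
lemma seg_bound {s : ℝ} (hs0 : 0 ≤ s) (hs1 : s ≤ 1) {t z F : ℂ}
    (htz : ‖t * z‖ ≤ 1/2) :
    ‖(s : ℂ) + t * F‖ ≤ ‖1 + t * z‖
      + ‖t‖ * ‖F - z‖ := by
  have step1 : ‖(s : ℂ) + t * F‖ ≤ ‖(s : ℂ) + t * z‖
      + ‖t‖ * ‖F - z‖ := by
    have hdec : (s : ℂ) + t * F = ((s : ℂ) + t * z) + t * (F - z) := by ring
    rw [hdec]
    calc ‖((s : ℂ) + t * z) + t * (F - z)‖
        ≤ ‖(s : ℂ) + t * z‖ + ‖t * (F - z)‖ :=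
          norm_add_le _ _
      _ = ‖(s : ℂ) + t * z‖ + ‖t‖ * ‖F - z‖ := by
          rw [norm_mul]
  have step2 : ‖(s : ℂ) + t * z‖ ≤ ‖1 + t * z‖ := by
    have hdec : (s : ℂ) + t * z = ((1 - s : ℝ) : ℂ) * (t * z) + ((s : ℝ) : ℂ) * (1 + t * z) := by
      push_cast; ring
    have h1 : ‖(s : ℂ) + t * z‖ ≤ (1 - s) * ‖t * z‖
        + s * ‖1 + t * z‖ := by
      rw [hdec]
      have e1 : ‖((1 - s : ℝ) : ℂ) * (t * z)‖ = (1 - s) * ‖t * z‖ := by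
        rw [norm_mul (((1 - s : ℝ) : ℂ)) (t * z), Complex.norm_real, Real.norm_eq_abs,
          abs_of_nonneg (by linarith : (0:ℝ) ≤ 1 - s)]
      have e2 : ‖((s : ℝ) : ℂ) * (1 + t * z)‖ = s * ‖1 + t * z‖ := by
        rw [norm_mul (((s : ℝ) : ℂ)) (1 + t * z), Complex.norm_real, Real.norm_eq_abs,
          abs_of_nonneg hs0]
      calc ‖((1 - s : ℝ) : ℂ) * (t * z) + ((s : ℝ) : ℂ) * (1 + t * z)‖
          ≤ ‖((1 - s : ℝ) : ℂ) * (t * z)‖ + ‖((s : ℝ) : ℂ) * (1 + t * z)‖ :=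
            norm_add_le _ _
        _ = (1 - s) * ‖t * z‖ + s * ‖1 + t * z‖ := by
            rw [e1, e2]
    have h2 : ‖t * z‖ ≤ ‖1 + t * z‖ := by
      have h3 : ‖(1:ℂ)‖ ≤ ‖1 + t * z‖ + ‖t * z‖ := by
        have := norm_add_le (1 + t * z) (-(t * z))
        simpa using this
      simp only [norm_one] at h3
      linarith
    nlinarith [norm_nonneg (t * z), norm_nonneg (1 + t * z)]
  linarith [mul_nonneg (norm_nonneg t) (norm_nonneg (F - z))]

/-- The main pointwise estimate: for every `δ > 0` and all sufficiently small `t`,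
`|(h a - h b) + t (f a - f b)| ≤ |1 + t (f x₁ - f x₂)| + δ |t|` uniformly in `a, b`. -/
lemma main_ineq (h : C(X, ℝ)) (x₁ x₂ : X)
    (h01 : ∀ a, 0 ≤ h a ∧ h a ≤ 1)
    (hl1 : ∀ a, h a = 1 → a = x₁) (hl0 : ∀ a, h a = 0 → a = x₂)
    (f : C(X, ℂ)) {δ : ℝ} (hδ : 0 < δ) :
    ∃ t₀ : ℝ, 0 < t₀ ∧ ∀ t : ℂ, ‖t‖ ≤ t₀ → ∀ a b : X,
      ‖((h a : ℂ) - (h b : ℂ)) + t * (f a - f b)‖ ≤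
        ‖1 + t * (f x₁ - f x₂)‖ + δ * ‖t‖ := by
  set z : ℂ := f x₁ - f x₂ with hz
  -- neighborhoods where f is close to its values at x₁, x₂
  set U : Set X := (fun a => f a - f x₁) ⁻¹' Metric.ball 0 (δ/4) with hUdef
  set V : Set X := (fun a => f a - f x₂) ⁻¹' Metric.ball 0 (δ/4) with hVdef
  have hUo : IsOpen U := Metric.isOpen_ball.preimage (f.continuous.sub continuous_const)
  have hVo : IsOpen V := Metric.isOpen_ball.preimage (f.continuous.sub continuous_const)
  have hUx : x₁ ∈ U := by simp [hUdef, Metric.mem_ball, hδ]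
  have hVx : x₂ ∈ V := by simp [hVdef, Metric.mem_ball, hδ]
  have hUV : ∀ a ∈ U, ∀ b ∈ V, ‖(f a - f b) - z‖ ≤ δ/2 := by
    intro a ha b hb
    have ha' : ‖f a - f x₁‖ ≤ δ/4 := by
      have : dist (f a - f x₁) 0 < δ/4 := ha
      rw [dist_zero_right] at this
      exact le_of_lt this
    have hb' : ‖f b - f x₂‖ ≤ δ/4 := by
      have : dist (f b - f x₂) 0 < δ/4 := hb
      rw [dist_zero_right] at this
      exact le_of_lt this
    have hdec : (f a - f b) - z = (f a - f x₁) - (f b - f x₂) := by rw [hz]; ring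
    rw [hdec]
    have htri : ‖(f a - f x₁) - (f b - f x₂)‖ ≤
        ‖f a - f x₁‖ + ‖f b - f x₂‖ := by
      exact norm_sub_le (f a - f x₁) (f b - f x₂)
    linarith
  obtain ⟨ε, hε, hpeak⟩ := peak_nbhd h x₁ x₂ h01 hl1 hl0 (hUo.mem_nhds hUx) (hVo.mem_nhds hVx)
  set ε' : ℝ := min ε (1/2) with hε'def
  have hε' : 0 < ε' := lt_min hε (by norm_num)
  have hε'le : ε' ≤ 1/2 := min_le_right _ _
  have hpeak' : ∀ a b : X, 1 - ε' ≤ h a - h b → a ∈ U ∧ b ∈ V := by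
    intro a b hab
    exact hpeak a b (by linarith [min_le_left ε (1/2 : ℝ)])
  set Cf : ℝ := 2*‖f‖ + ‖z‖ + 1 with hCf
  have hCf0 : 0 < Cf := by positivity
  refine ⟨min (ε' / Cf) (1/(2*(‖z‖ + 1))), lt_min (by positivity) (by positivity), ?_⟩
  intro t ht a b
  have ht1 : ‖t‖ ≤ ε' / Cf := le_trans ht (min_le_left _ _)
  have ht2 : ‖t‖ ≤ 1/(2*(‖z‖ + 1)) := le_trans ht (min_le_right _ _)
  have habt : 0 ≤ ‖t‖ := norm_nonneg t
  have habz : 0 ≤ ‖z‖ := norm_nonneg z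
  have htz : ‖t * z‖ ≤ 1/2 := by
    rw [norm_mul]
    have h6 : ‖t‖ * (2*(‖z‖ + 1)) ≤ 1 := by
      rw [← le_div_iff₀ (by positivity)]
      simpa [div_eq_mul_inv] using ht2
    nlinarith
  have hFnorm : ‖f a - f b‖ ≤ 2*‖f‖ := by
    calc ‖f a - f b‖ ≤ ‖f a‖ + ‖f b‖ := norm_sub_le (f a) (f b)
      _ ≤ 2*‖f‖ := by linarith [f.norm_coe_le_norm a, f.norm_coe_le_norm b]
  rcases le_or_gt (1 - ε') (h a - h b) with hcase | hcase1
  · -- `(a, b)` is near `(x₁, x₂)`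
    obtain ⟨haU, hbV⟩ := hpeak' a b hcase
    have hFz := hUV a haU b hbV
    have hs0 : 0 ≤ h a - h b := by linarith
    have hs1 : h a - h b ≤ 1 := by linarith [(h01 a).2, (h01 b).1]
    have hcast : ((h a : ℂ) - (h b : ℂ)) = (((h a - h b : ℝ)) : ℂ) := by push_cast; ring
    rw [hcast]
    have hsb := seg_bound hs0 hs1 htz (F := f a - f b)
    have : ‖t‖ * ‖(f a - f b) - z‖ ≤ δ * ‖t‖ := by
      calc ‖t‖ * ‖(f a - f b) - z‖ ≤ ‖t‖ * (δ/2) :=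
            mul_le_mul_of_nonneg_left hFz habt
        _ ≤ δ * ‖t‖ := by nlinarith
    linarith
  rcases le_or_gt (1 - ε') (h b - h a) with hcase | hcase2
  · -- `(b, a)` is near `(x₁, x₂)`
    obtain ⟨hbU, haV⟩ := hpeak' b a hcase
    have hFz := hUV b hbU a haV
    have hs0 : 0 ≤ h b - h a := by linarith
    have hs1 : h b - h a ≤ 1 := by linarith [(h01 b).2, (h01 a).1]
    have hneg : ((h a : ℂ) - (h b : ℂ)) + t * (f a - f b) =
        -((((h b - h a : ℝ)) : ℂ) + t * (f b - f a)) := by push_cast; ring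
    rw [hneg, norm_neg]
    have hsb := seg_bound hs0 hs1 htz (F := f b - f a)
    have : ‖t‖ * ‖(f b - f a) - z‖ ≤ δ * ‖t‖ := by
      calc ‖t‖ * ‖(f b - f a) - z‖ ≤ ‖t‖ * (δ/2) :=
            mul_le_mul_of_nonneg_left hFz habt
        _ ≤ δ * ‖t‖ := by nlinarith
    linarith
  · -- both differences are below the peak level
    have hcast : ((h a : ℂ) - (h b : ℂ)) = (((h a - h b : ℝ)) : ℂ) := by push_cast; ring
    have hbound : ‖((h a : ℂ) - (h b : ℂ)) + t * (f a - f b)‖ ≤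
        (1 - ε') + ‖t‖ * (2*‖f‖) := by
      rw [hcast]
      calc ‖(((h a - h b : ℝ)) : ℂ) + t * (f a - f b)‖
          ≤ ‖((h a - h b : ℝ) : ℂ)‖ + ‖t * (f a - f b)‖ :=
            norm_add_le _ _
        _ ≤ (1 - ε') + ‖t‖ * (2*‖f‖) := by
            rw [Complex.norm_real, Real.norm_eq_abs, norm_mul]
            have h7 : |h a - h b| ≤ 1 - ε' := abs_le.2 ⟨by linarith, by linarith⟩
            have h8 : ‖t‖ * ‖f a - f b‖ ≤ ‖t‖ * (2*‖f‖) :=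
              mul_le_mul_of_nonneg_left hFnorm habt
            linarith
    have hlow : 1 - ‖t‖ * ‖z‖ ≤ ‖1 + t * z‖ := by
      have h3 : ‖(1:ℂ)‖ ≤ ‖1 + t * z‖ + ‖t * z‖ := by
        have h4 := norm_add_le (1 + t * z) (-(t * z))
        simpa using h4
      rw [norm_one] at h3
      rw [norm_mul] at h3
      linarith
    have hsmall : ‖t‖ * Cf ≤ ε' := by
      rw [← le_div_iff₀ hCf0]
      exact ht1
    have hfn : (0:ℝ) ≤ ‖f‖ := norm_nonneg f
    nlinarith

end MainIneq

section StepA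

variable {X Y : Type*} [TopologicalSpace X] [CompactSpace X] [T2Space X]
  [TopologicalSpace Y] [CompactSpace Y] [Nonempty X] [Nonempty Y]

/-- Key lemma: if `T` is a linear map preserving `cdiam`, `h` is a peak function for
`(x₁, x₂)` and `(p, q)` attains the (unit) diameter of `T h`, then evaluation of `T f` at
`(p, q)` recovers `λ (f x₁ - f x₂)` for every `f`. -/
lemma stepA (T : C(X, ℂ) →ₗ[ℂ] C(Y, ℂ)) (hT : ∀ u, cdiam (T u) = cdiam u)
    (h : C(X, ℝ)) (x₁ x₂ : X)
    (h01 : ∀ a, 0 ≤ h a ∧ h a ≤ 1)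
    (hl1 : ∀ a, h a = 1 → a = x₁) (hl0 : ∀ a, h a = 0 → a = x₂)
    (hC : C(X, ℂ)) (hhC : ∀ a, hC a = ((h a : ℝ) : ℂ))
    (p q : Y) (hpq1 : ‖T hC p - T hC q‖ = 1)
    (f : C(X, ℂ)) :
    T f p - T f q = (T hC p - T hC q) * (f x₁ - f x₂) := by
  set lam : ℂ := T hC p - T hC q with hlam
  have hlam0 : lam ≠ 0 := by
    intro h0
    rw [h0] at hpq1
    simp at hpq1
  set w : ℂ := T f p - T f q with hw
  set z : ℂ := f x₁ - f x₂ with hz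
  suffices hsuff : w / lam = z by
    field_simp at hsuff
    rw [hsuff]
  apply forces_eq
  intro δ hδ
  obtain ⟨t₀, ht₀, hmain⟩ := main_ineq h x₁ x₂ h01 hl1 hl0 f hδ
  refine ⟨t₀, ht₀, ?_⟩
  intro t ht
  -- rewrite |1 + t w/λ| as |λ + t w|
  have hfac : lam * (1 + t * (w / lam)) = lam + t * w := by
    field_simp
  have habs1 : ‖1 + t * (w / lam)‖ = ‖lam + t * w‖ := by
    rw [← hfac, norm_mul, hpq1, one_mul]
  rw [habs1]
  -- `λ + t w` is a difference of values of `T (hC + t • f)`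
  have hTlin : T (hC + t • f) = T hC + t • T f := by
    rw [map_add, map_smul]
  have happ : T (hC + t • f) p - T (hC + t • f) q = lam + t * w := by
    rw [hTlin]
    simp only [ContinuousMap.add_apply, ContinuousMap.smul_apply, smul_eq_mul]
    rw [hlam, hw]; ring
  have h1 : ‖lam + t * w‖ ≤ cdiam (hC + t • f) := by
    rw [← hT (hC + t • f), ← happ]
    exact le_cdiam _ p q
  have h2 : cdiam (hC + t • f) ≤ ‖1 + t * z‖ + δ * ‖t‖ := by
    refine cdiam_le _ fun a b => ?_
    have heval : (hC + t • f) a - (hC + t • f) b =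
        ((h a : ℂ) - (h b : ℂ)) + t * (f a - f b) := by
      simp only [ContinuousMap.add_apply, ContinuousMap.smul_apply, smul_eq_mul, hhC]
      ring
    rw [heval]
    exact hmain t ht a b
  linarith

end StepA

/-- Claim 4: for every `(x₁, x₂) ∈ X̃`, the set `B_{(x₁,x₂)} = ⋂_f B_{(x₁,x₂),f}` is nonempty. -/
theorem Bset_iInter_nonempty
    {X Y : Type*} [TopologicalSpace X] [CompactSpace X] [T2Space X] [FirstCountableTopology X]
    [TopologicalSpace Y] [CompactSpace Y] [T2Space Y] [FirstCountableTopology Y]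
    (h2X : ∃ a b : X, a ≠ b) (h2Y : ∃ a b : Y, a ≠ b)
    (Δ : C(X, ℂ) → C(Y, ℂ)) (hΔ : TwoLocalDiamPreserving Δ)
    (x₁ x₂ : X) (hx : x₁ ≠ x₂) :
    (⋂ f : C(X, ℂ), Bset Δ x₁ x₂ f).Nonempty := by
  haveI : Nonempty X := ⟨x₁⟩
  obtain ⟨y₀, -, -⟩ := h2Y
  haveI : Nonempty Y := ⟨y₀⟩
  -- the peak function
  obtain ⟨h, h01, hhx1, hhx2, hl1, hl0⟩ := exists_peak_fun x₁ x₂ hx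
  set hC : C(X, ℂ) := ⟨fun a => ((h a : ℝ) : ℂ), Complex.continuous_ofReal.comp h.continuous⟩
    with hhCdef
  have hhC : ∀ a, hC a = ((h a : ℝ) : ℂ) := fun a => rfl
  -- `cdiam hC = 1`
  have hcd : cdiam hC = 1 := by
    refine le_antisymm (cdiam_le _ fun a b => ?_) ?_
    · have : hC a - hC b = ((h a - h b : ℝ) : ℂ) := by rw [hhC, hhC]; push_cast; ring
      rw [this, Complex.norm_real, Real.norm_eq_abs]
      rw [abs_le]
      constructor <;> [linarith [(h01 a).1, (h01 b).2]; linarith [(h01 a).2, (h01 b).1]]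
    · have h1 : ‖hC x₁ - hC x₂‖ = 1 := by
        rw [hhC, hhC, hhx1, hhx2]
        norm_num
      rw [← h1]
      exact le_cdiam hC x₁ x₂
  -- a diameter-preserving linear map agreeing with Δ at hC shows `cdiam (Δ hC) = 1`
  have hTdiam : ∀ T : C(X, ℂ) →ₗ[ℂ] C(Y, ℂ), DiamPreserving (⇑T) → ∀ u, cdiam (T u) = cdiam u := by
    intro T hdp u
    have := hdp u 0
    rw [map_zero] at this
    simpa using this
  have hΔcd : cdiam (Δ hC) = 1 := by
    obtain ⟨T₀, -, hdp₀, hT₀h, -⟩ := hΔ hC hC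
    rw [← hT₀h, hTdiam T₀ hdp₀ hC, hcd]
  -- choose a diameter-attaining pair for `Δ hC`
  obtain ⟨p, q, hpq⟩ := exists_cdiam_attained (Δ hC)
  rw [hΔcd] at hpq
  have hpqne : p ≠ q := by
    intro hpq'
    rw [hpq'] at hpq
    simp at hpq
  set lam : ℂ := Δ hC p - Δ hC q with hlamdef
  have hlamabs : ‖lam‖ = 1 := hpq
  refine ⟨((p, q), lam), ?_⟩
  rw [Set.mem_iInter]
  intro f
  refine ⟨hpqne, hlamabs, ?_⟩
  obtain ⟨T, -, hdp, hTh, hTf⟩ := hΔ hC f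
  have key := stepA T (hTdiam T hdp) h x₁ x₂ h01 hl1 hl0 hC hhC p q
    (by rw [hTh]; exact hpq) f
  rw [hTh, hTf] at key
  exact key
end
end

section
/- Let X and Y be first countable compact Hausdorff spaces, each with at least two points, and let Δ : C(X) → C(Y) be a 2-local diameter-preserving map. Suppose that for every (x₁, x₂) ∈ X̃ the set A_{(x₁,x₂)} is a singleton, and let Γ : X̃ → Ỹ assign to (x₁, x₂) the unique element of A_{(x₁,x₂)}. Then Γ is injective, i.e. if Γ((x₁, x₂)) = Γ((x₃, x₄)) for (x₁, x₂), (x₃, x₄) ∈ X̃, then (x₁, x₂) = (x₃, x₄). -/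
noncomputable section

/-- The set `𝕋⁺ = {e^{it} : t ∈ [0, π)}`. -/
def Tplus : Set ℂ :=
  {z | ∃ t : ℝ, 0 ≤ t ∧ t < Real.pi ∧ z = Complex.exp (t * Complex.I)}

/-- The set `A_{(x₁,x₂)} = {(y₁,y₂) ∈ Ỹ : ∃ λ ∈ 𝕋⁺, ((y₁,y₂),λ) ∈ B_{(x₁,x₂)}}`. -/
def Aset {X Y : Type*} [TopologicalSpace X] [TopologicalSpace Y]
    (Δ : C(X, ℂ) → C(Y, ℂ)) (x₁ x₂ : X) : Set (Y × Y) :=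
  {q | q.1 ≠ q.2 ∧ ∃ lam ∈ Tplus, (q, lam) ∈ ⋂ f : C(X, ℂ), Bset Δ x₁ x₂ f}

lemma ne_zero_of_mem_Tplus {lam : ℂ} (h : lam ∈ Tplus) : lam ≠ 0 := by
  obtain ⟨t, -, -, rfl⟩ := h
  exact Complex.exp_ne_zero _

lemma im_nonneg_of_mem_Tplus {lam : ℂ} (h : lam ∈ Tplus) : 0 ≤ lam.im := by
  obtain ⟨t, ht0, htπ, rfl⟩ := h
  rw [Complex.exp_ofReal_mul_I_im]
  exact Real.sin_nonneg_of_nonneg_of_le_pi ht0 htπ.le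

lemma eq_one_of_mem_Tplus_of_im_eq_zero {lam : ℂ} (h : lam ∈ Tplus) (him : lam.im = 0) :
    lam = 1 := by
  obtain ⟨t, ht0, htπ, rfl⟩ := h
  rw [Complex.exp_ofReal_mul_I_im] at him
  obtain rfl : t = 0 :=
    (ht0.eq_or_lt.resolve_right fun ht => (Real.sin_pos_of_pos_of_lt_pi ht htπ).ne' him).symm
  simp

lemma neg_notMem_Tplus {lam : ℂ} (h : lam ∈ Tplus) : -lam ∉ Tplus := by
  intro hneg
  have him : lam.im = 0 :=
    le_antisymm (by simpa using im_nonneg_of_mem_Tplus hneg) (im_nonneg_of_mem_Tplus h)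
  have h1 : lam = 1 := eq_one_of_mem_Tplus_of_im_eq_zero h him
  have h2 : -lam = 1 := eq_one_of_mem_Tplus_of_im_eq_zero hneg (by simp [him])
  rw [h1] at h2
  norm_num at h2

lemma exists_continuous_eq_one_of_notMem_finite {X : Type*} [TopologicalSpace X] [NormalSpace X]
    [T1Space X] {x : X} {S : Set X} (hS : S.Finite) (hx : x ∉ S) :
    ∃ f : C(X, ℂ), f x = 1 ∧ ∀ s ∈ S, f s = 0 := by
  obtain ⟨f, hf0, hf1, -⟩ := exists_continuous_zero_one_of_isClosed hS.isClosed
    isClosed_singleton (Set.disjoint_singleton_right.mpr hx)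
  exact ⟨⟨fun y => (f y : ℂ), by fun_prop⟩, by simp [hf1 rfl], fun s hs => by simp [hf0 hs]⟩

section Separation

variable {X : Type*} [TopologicalSpace X] [NormalSpace X] [T1Space X] {x₁ x₂ x₃ x₄ : X}
  {lam mu : ℂ}

lemma eq_or_eq_of_forall_mul_sub_eq (hlam : lam ≠ 0) (hx : x₁ ≠ x₂)
    (h : ∀ f : C(X, ℂ), lam * (f x₁ - f x₂) = mu * (f x₃ - f x₄)) : x₁ = x₃ ∨ x₁ = x₄ := by
  by_contra! hne
  obtain ⟨f, hf1, hf0⟩ := exists_continuous_eq_one_of_notMem_finite (x := x₁)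
    (Set.toFinite {x₂, x₃, x₄}) (by simp [hx, hne.1, hne.2])
  have := h f
  simp only [hf1, hf0 x₂ (by simp), hf0 x₃ (by simp), hf0 x₄ (by simp)] at this
  exact hlam (by simpa using this)

lemma eq_neg_of_forall_mul_sub_eq_swap (hx : x₁ ≠ x₂)
    (h : ∀ f : C(X, ℂ), lam * (f x₁ - f x₂) = mu * (f x₂ - f x₁)) : lam = -mu := by
  obtain ⟨f, hf1, hf0⟩ := exists_continuous_eq_one_of_notMem_finite (x := x₁)
    (Set.toFinite {x₂}) (by simpa using hx)
  have := h f
  simp only [hf1, hf0 x₂ (by simp)] at this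
  linear_combination this

/-- Urysohn functions force the two pairs to consist of the same points; the swapped order would
force `lam = -mu`, which `𝕋⁺` excludes. -/
lemma Prod.eq_of_forall_mul_sub_eq (hx : x₁ ≠ x₂) (hlam : lam ∈ Tplus) (hmu : mu ∈ Tplus)
    (h : ∀ f : C(X, ℂ), lam * (f x₁ - f x₂) = mu * (f x₃ - f x₄)) : (x₁, x₂) = (x₃, x₄) := by
  have h' : ∀ f : C(X, ℂ), lam * (f x₂ - f x₁) = mu * (f x₄ - f x₃) := fun f => by
    linear_combination -h f
  rcases eq_or_eq_of_forall_mul_sub_eq (ne_zero_of_mem_Tplus hlam) hx h with rfl | rfl <;>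
    rcases eq_or_eq_of_forall_mul_sub_eq (ne_zero_of_mem_Tplus hlam) hx.symm h' with rfl | rfl
  · rfl
  · exact absurd rfl hx
  · exact absurd rfl hx
  · exact absurd (eq_neg_of_forall_mul_sub_eq_swap hx h ▸ hlam) (neg_notMem_Tplus hmu)

end Separation

lemma exists_mul_sub_eq_of_mem_Aset {X Y : Type*} [TopologicalSpace X] [TopologicalSpace Y]
    {Δ : C(X, ℂ) → C(Y, ℂ)} {x₁ x₂ x₃ x₄ : X} {y : Y × Y}
    (h₁₂ : y ∈ Aset Δ x₁ x₂) (h₃₄ : y ∈ Aset Δ x₃ x₄) :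
    ∃ lam ∈ Tplus, ∃ mu ∈ Tplus, ∀ f : C(X, ℂ), lam * (f x₁ - f x₂) = mu * (f x₃ - f x₄) := by
  obtain ⟨-, lam, hlam, hB₁₂⟩ := h₁₂
  obtain ⟨-, mu, hmu, hB₃₄⟩ := h₃₄
  refine ⟨lam, hlam, mu, hmu, fun f => ?_⟩
  rw [← (Set.mem_iInter.mp hB₁₂ f).2.2, ← (Set.mem_iInter.mp hB₃₄ f).2.2]

theorem Gamma_injective_general
    {X Y : Type*} [TopologicalSpace X] [CompactSpace X] [T2Space X]
    [TopologicalSpace Y]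
    (Δ : C(X, ℂ) → C(Y, ℂ))
    (Γ : X × X → Y × Y)
    (hΓ : ∀ p : X × X, p.1 ≠ p.2 → Aset Δ p.1 p.2 = {Γ p}) :
    ∀ p q : X × X, p.1 ≠ p.2 → q.1 ≠ q.2 → Γ p = Γ q → p = q := by
  intro p q hp hq hpq
  have hpA : Γ p ∈ Aset Δ p.1 p.2 := by rw [hΓ p hp]; rfl
  have hqA : Γ p ∈ Aset Δ q.1 q.2 := by rw [hpq, hΓ q hq]; rfl
  obtain ⟨lam, hlam, mu, hmu, h⟩ := exists_mul_sub_eq_of_mem_Aset hpA hqA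
  exact Prod.eq_of_forall_mul_sub_eq hp hlam hmu h

/-- Claim 8: the map `Γ : X̃ → Ỹ` sending `(x₁, x₂)` to the unique point of `A_{(x₁,x₂)}`
is injective. -/
theorem Gamma_injective
    {X Y : Type*} [TopologicalSpace X] [CompactSpace X] [T2Space X] [FirstCountableTopology X]
    [TopologicalSpace Y] [CompactSpace Y] [T2Space Y] [FirstCountableTopology Y]
    (h2X : ∃ a b : X, a ≠ b) (h2Y : ∃ a b : Y, a ≠ b)
    (Δ : C(X, ℂ) → C(Y, ℂ)) (hΔ : TwoLocalDiamPreserving Δ)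
    (Γ : X × X → Y × Y)
    (hΓ : ∀ p : X × X, p.1 ≠ p.2 → Aset Δ p.1 p.2 = {Γ p}) :
    ∀ p q : X × X, p.1 ≠ p.2 → q.1 ≠ q.2 → Γ p = Γ q → p = q :=
  Gamma_injective_general Δ Γ hΓ
end
end

section
/- Let X and Y be first countable compact Hausdorff spaces, each with at least two points, and let Δ : C(X) → C(Y) be a 2-local diameter-preserving map. Suppose that for every (x₁, x₂) ∈ X̃ the set A_{(x₁,x₂)} is a singleton, and let Γ : X̃ → Ỹ assign to (x₁, x₂) the unique element of A_{(x₁,x₂)}. Then for all (x₁, x₂), (x₃, x₄) ∈ X̃, the cardinality of {x₁, x₂} ∩ {x₃, x₄} equals the cardinality of Λ_Y(Γ((x₁, x₂))) ∩ Λ_Y(Γ((x₃, x₄))), where Λ_Y((y₁, y₂)) = {y₁, y₂}. -/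
noncomputable section

open Set Complex Topology

section Aux

variable {Z : Type*} [TopologicalSpace Z]

lemma cfun_bound [CompactSpace Z] [Nonempty Z] (f : C(Z, ℂ)) :
    ∃ C : ℝ, 1 ≤ C ∧ ∀ x, ‖f x‖ ≤ C := by
  obtain ⟨x₀, -, hx₀⟩ := isCompact_univ.exists_isMaxOn univ_nonempty
    ((continuous_norm.comp (map_continuous f)).continuousOn)
  exact ⟨max 1 (‖f x₀‖), le_max_left _ _,
    fun x => le_trans (hx₀ (mem_univ x)) (le_max_right _ _)⟩

lemma cdiam_bddAbove [CompactSpace Z] [Nonempty Z] (f : C(Z,ℂ)) :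
    BddAbove (Set.range fun p : Z × Z => ‖f p.1 - f p.2‖) := by
  obtain ⟨C, -, hC⟩ := cfun_bound f
  refine ⟨2*C, ?_⟩
  rintro r ⟨p, rfl⟩
  calc ‖f p.1 - f p.2‖ ≤ ‖f p.1‖ + ‖f p.2‖ := by
        simpa using norm_sub_le (f p.1) (f p.2)
    _ ≤ 2*C := by have h1 := hC p.1; have h2 := hC p.2; linarith

lemma abs_sub_le_cdiam [CompactSpace Z] [Nonempty Z] (f : C(Z,ℂ)) (x y : Z) :
    ‖f x - f y‖ ≤ cdiam f :=
  le_ciSup (cdiam_bddAbove f) (x, y)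

lemma cdiam_le_s13 [Nonempty Z] {f : C(Z,ℂ)} {M : ℝ}
    (h : ∀ x y : Z, ‖f x - f y‖ ≤ M) : cdiam f ≤ M :=
  ciSup_le (fun p => h p.1 p.2)

lemma bump_pair [CompactSpace Z] [T2Space Z] (S T : Set Z) (hS : S.Finite) (hT : T.Finite)
    (hd : Disjoint S T) :
    ∃ P : C(Z, ℂ), (∀ x ∈ S, P x = 1) ∧ (∀ x ∈ T, P x = 0) ∧
      ∀ x y, ‖P x - P y‖ ≤ 1 := by
  obtain ⟨g, hg0, hg1, hg01⟩ := exists_continuous_zero_one_of_isClosed hT.isClosed hS.isClosed hd.symm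
  refine ⟨⟨fun x => ((g x : ℝ) : ℂ), Complex.continuous_ofReal.comp g.continuous⟩,
    fun x hx => ?_, fun x hx => ?_, fun x y => ?_⟩
  · have := hg1 hx; simp only [Pi.one_apply] at this
    simp [this]
  · have := hg0 hx; simp only [Pi.zero_apply] at this
    simp [this]
  · have h1 := hg01 x; have h2 := hg01 y
    simp only [ContinuousMap.coe_mk]
    rw [← Complex.ofReal_sub, Complex.norm_real, Real.norm_eq_abs, abs_le]
    constructor <;> [linarith [h1.1, h2.2]; linarith [h1.2, h2.1]]

lemma four_point_contra [CompactSpace Z] [T2Space Z] [Nonempty Z]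
    {w₁ w₂ w₃ w₄ : Z} (h12 : w₁ ≠ w₂) (h13 : w₁ ≠ w₃) (h14 : w₁ ≠ w₄)
    (h23 : w₂ ≠ w₃) (h24 : w₂ ≠ w₄) (h34 : w₃ ≠ w₄)
    {α β : ℂ} (hα : ‖α‖ = 1) (hβ : ‖β‖ = 1)
    (hb : ∀ F : C(Z,ℂ), ‖α * (F w₁ - F w₂) + β * (F w₃ - F w₄)‖ ≤ cdiam F) :
    False := by
  have h32 := h23.symm; have h42 := h24.symm; have h43 := h34.symm
  have h21 := h12.symm; have h31 := h13.symm; have h41 := h14.symm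
  have hdj : ∀ s₁ s₂ t₁ t₂ : Z, s₁ ≠ t₁ → s₁ ≠ t₂ → s₂ ≠ t₁ → s₂ ≠ t₂ →
      Disjoint ({s₁, s₂} : Set Z) {t₁, t₂} := by
    intro s₁ s₂ t₁ t₂ a1 a2 a3 a4
    rw [Set.disjoint_iff_forall_ne]
    rintro x hx y hy
    simp only [Set.mem_insert_iff, Set.mem_singleton_iff] at hx hy
    rcases hx with rfl|rfl <;> rcases hy with rfl|rfl <;> assumption
  have hfin : ∀ t₁ t₂ : Z, Set.Finite ({t₁, t₂} : Set Z) :=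
    fun t₁ t₂ => (Set.finite_singleton t₂).insert t₁
  obtain ⟨P₁, hP₁S, hP₁T, hP₁d⟩ := bump_pair {w₁, w₃} {w₂, w₄}
    (hfin _ _) (hfin _ _) (hdj _ _ _ _ h12 h14 h32 h34)
  obtain ⟨P₂, hP₂S, hP₂T, hP₂d⟩ := bump_pair {w₁, w₄} {w₂, w₃}
    (hfin _ _) (hfin _ _) (hdj _ _ _ _ h12 h13 h42 h43)
  have e₁ : ‖α + β‖ ≤ 1 := by
    have h := hb P₁
    rw [hP₁S w₁ (by simp), hP₁S w₃ (by simp), hP₁T w₂ (by simp), hP₁T w₄ (by simp)] at h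
    simp only [sub_zero, mul_one] at h
    exact le_trans h (cdiam_le_s13 hP₁d)
  have e₂ : ‖α - β‖ ≤ 1 := by
    have h := hb P₂
    rw [hP₂S w₁ (by simp), hP₂T w₂ (by simp), hP₂T w₃ (by simp), hP₂S w₄ (by simp)] at h
    simp only [sub_zero, zero_sub, mul_one, mul_neg] at h
    rw [show α + -β = α - β by ring] at h
    exact le_trans h (cdiam_le_s13 hP₂d)
  have key : Complex.normSq (α+β) + Complex.normSq (α-β)
      = 2*(Complex.normSq α) + 2*(Complex.normSq β) := by
    simp only [Complex.normSq_apply, Complex.add_re, Complex.add_im, Complex.sub_re,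
      Complex.sub_im]
    ring
  have nα : Complex.normSq α = 1 := by rw [← Complex.sq_norm, hα]; norm_num
  have nβ : Complex.normSq β = 1 := by rw [← Complex.sq_norm, hβ]; norm_num
  have s₁ : Complex.normSq (α+β) ≤ 1 := by
    rw [← Complex.sq_norm]; nlinarith [norm_nonneg (α+β)]
  have s₂ : Complex.normSq (α-β) ≤ 1 := by
    rw [← Complex.sq_norm]; nlinarith [norm_nonneg (α-β)]
  rw [nα, nβ] at key
  linarith


lemma peak_nbhd_s13 [CompactSpace Z] {u : C(Z,ℝ)} {a : Z}
    (hpeak : ∀ x, x ≠ a → u x < 1) {A : Set Z} (hA : IsOpen A) (haA : a ∈ A) :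
    ∃ κ : ℝ, 0 < κ ∧ κ ≤ 1 ∧ ∀ x, 1 - κ ≤ u x → x ∈ A := by
  by_cases hAc : Aᶜ = ∅
  · refine ⟨1, one_pos, le_refl 1, fun x _ => ?_⟩
    have : x ∉ Aᶜ := by rw [hAc]; exact notMem_empty x
    simpa using this
  · obtain ⟨x₀, hx₀mem, hx₀⟩ := (hA.isClosed_compl.isCompact).exists_isMaxOn
      (nonempty_iff_ne_empty.mpr hAc) u.continuous.continuousOn
    have hx₀a : x₀ ≠ a := fun h => (h ▸ hx₀mem) haA
    have hlt : u x₀ < 1 := hpeak _ hx₀a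
    refine ⟨min ((1 - u x₀)/2) 1, lt_min (by linarith) one_pos, min_le_right _ _, fun x hx => ?_⟩
    by_contra hxA
    have h1 : u x ≤ u x₀ := hx₀ (by exact hxA)
    have h2 : min ((1 - u x₀)/2) 1 ≤ (1 - u x₀)/2 := min_le_left _ _
    linarith

lemma gdelta_bump [CompactSpace Z] [T2Space Z] [FirstCountableTopology Z]
    (a : Z) (W : Set Z) (hW : IsOpen W) (haW : a ∈ W) :
    ∃ u : C(Z, ℝ), u a = 1 ∧ (∀ x, u x ∈ Set.Icc (0:ℝ) 1) ∧ (∀ x, x ∉ W → u x = 0) ∧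
      (∀ x, x ≠ a → u x < 1) := by
  obtain ⟨B, hB⟩ := (𝓝 a).exists_antitone_basis
  have hsel : ∀ n : ℕ, ∃ g : C(Z,ℝ), g a = 1 ∧ (∀ x, g x ∈ Icc (0:ℝ) 1) ∧
      ∀ x, x ∉ (interior (B n) ∩ W) → g x = 0 := by
    intro n
    have hBn : B n ∈ 𝓝 a := hB.toHasBasis.mem_of_mem trivial
    have haB : a ∈ interior (B n) := mem_interior_iff_mem_nhds.mpr hBn
    have hcl : IsClosed ((interior (B n) ∩ W)ᶜ) := (isOpen_interior.inter hW).isClosed_compl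
    have hd : Disjoint ((interior (B n) ∩ W)ᶜ) {a} := by
      rw [Set.disjoint_singleton_right]
      simp only [Set.mem_compl_iff, not_not]
      exact ⟨haB, haW⟩
    obtain ⟨g, hg0, hg1, hg01⟩ := exists_continuous_zero_one_of_isClosed hcl isClosed_singleton hd
    refine ⟨g, ?_, hg01, fun x hx => ?_⟩
    · have := hg1 rfl; simpa using this
    · have := hg0 hx; simpa using this
  choose g hga hg01 hgout using hsel
  have hnormg : ∀ n, ‖((1:ℝ)/2)^(n+1) • g n‖ ≤ (1/2)^(n+1) := by
    intro n
    refine (ContinuousMap.norm_le _ (by positivity)).mpr (fun x => ?_)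
    have h := hg01 n x
    have habs : |g n x| ≤ 1 := abs_le.mpr ⟨by linarith [h.1], h.2⟩
    simp only [ContinuousMap.smul_apply, smul_eq_mul]
    rw [Real.norm_eq_abs, abs_mul, _root_.abs_of_nonneg (by positivity : (0:ℝ) ≤ ((1:ℝ)/2)^(n+1))]
    exact mul_le_of_le_one_right (by positivity) habs
  have hgeo : Summable (fun n : ℕ => ((1:ℝ)/2)^(n+1)) := by
    have := (summable_geometric_of_lt_one (by norm_num : (0:ℝ) ≤ 1/2) (by norm_num)).mul_right ((1:ℝ)/2)
    refine this.congr (fun n => ?_)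
    rw [← pow_succ]
  have hsum : Summable (fun n => ((1:ℝ)/2)^(n+1) • g n) :=
    Summable.of_norm (hgeo.of_nonneg_of_le (fun n => norm_nonneg _) hnormg)
  set u : C(Z,ℝ) := ∑' n, ((1:ℝ)/2)^(n+1) • g n with hu
  have happly : ∀ x, u x = ∑' n, ((1:ℝ)/2)^(n+1) * g n x := by
    intro x
    have h := (ContinuousMap.evalCLM ℝ x).map_tsum hsum
    simpa [hu] using h
  have hsumx : ∀ x, Summable (fun n => ((1:ℝ)/2)^(n+1) * g n x) := by
    intro x
    refine hgeo.of_nonneg_of_le (fun n => ?_) (fun n => ?_)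
    · have h := hg01 n x
      exact mul_nonneg (by positivity) h.1
    · have h := hg01 n x
      exact mul_le_of_le_one_right (by positivity) h.2
  have hgeo1 : ∑' n : ℕ, ((1:ℝ)/2)^(n+1) = 1 := by
    have h : ∀ n : ℕ, ((1:ℝ)/2)^(n+1) = (1/2)^n * (1/2) := fun n => pow_succ _ _
    rw [tsum_congr h, tsum_mul_right, tsum_geometric_of_lt_one (by norm_num) (by norm_num)]
    norm_num
  refine ⟨u, ?_, fun x => ⟨?_, ?_⟩, fun x hx => ?_, fun x hx => ?_⟩
  · rw [happly a]
    have : ∀ n : ℕ, ((1:ℝ)/2)^(n+1) * g n a = (1/2)^(n+1) := by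
      intro n; rw [hga n]; ring
    rw [tsum_congr this, hgeo1]
  · rw [happly x]
    exact tsum_nonneg (fun n => by
      have h := hg01 n x
      exact mul_nonneg (by positivity) h.1)
  · rw [happly x]
    have hle : ∑' n, ((1:ℝ)/2)^(n+1) * g n x ≤ ∑' n : ℕ, ((1:ℝ)/2)^(n+1) :=
      Summable.tsum_le_tsum (fun n => mul_le_of_le_one_right (by positivity) (hg01 n x).2) (hsumx x) hgeo
    rw [hgeo1] at hle; exact hle
  · rw [happly x]
    have : ∀ n : ℕ, ((1:ℝ)/2)^(n+1) * g n x = 0 := by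
      intro n
      rw [hgout n x (fun hmem => hx hmem.2)]
      ring
    rw [tsum_congr this, tsum_zero]
  · -- x ≠ a : some basis set misses x
    have hxc : ({x}ᶜ : Set Z) ∈ 𝓝 a := isOpen_compl_singleton.mem_nhds (by simpa using hx.symm)
    obtain ⟨m, -, hm⟩ := hB.toHasBasis.mem_iff.mp hxc
    have hgm : g m x = 0 := by
      apply hgout m x
      intro hmem
      exact (hm (interior_subset hmem.1)) rfl
    have hterm : (1/2:ℝ)^(m+1) ≤ ∑' n, (((1:ℝ)/2)^(n+1) - ((1:ℝ)/2)^(n+1) * g n x) := by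
      have hsub : Summable (fun n => (((1:ℝ)/2)^(n+1) - ((1:ℝ)/2)^(n+1) * g n x)) :=
        hgeo.sub (hsumx x)
      have := Summable.le_tsum hsub m (fun n _ => by
        have h := hg01 n x
        nlinarith [mul_le_of_le_one_right (le_of_lt (pow_pos (by norm_num : (0:ℝ) < 1/2) (n+1))) h.2])
      simpa [hgm] using this
    have hsplit : ∑' n, (((1:ℝ)/2)^(n+1) - ((1:ℝ)/2)^(n+1) * g n x) = 1 - u x := by
      rw [Summable.tsum_sub hgeo (hsumx x), hgeo1, happly x]
    rw [hsplit] at hterm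
    nlinarith [pow_pos (by norm_num : (0:ℝ) < 1/2) (m+1)]


lemma sq_step {τ w : ℂ} {d ε R : ℝ} (hτ : ‖τ‖ = 1)
    (hd1 : 1 ≤ d) (hd2 : d ≤ 2) (hε : 0 ≤ ε)
    (hR : (τ * (starRingEnd ℂ) w).re = R)
    (hsmall : ε * ‖w‖ ≤ 1/4) :
    ‖τ * (d:ℂ) + (ε:ℂ) * w‖ ≤ 2 + ε*R + ε^2 * Complex.normSq w := by
  set N : ℝ := Complex.normSq w with hN
  have hN0 : 0 ≤ N := Complex.normSq_nonneg w
  have hconj : τ * (d:ℂ) * (starRingEnd ℂ) ((ε:ℂ) * w)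
      = ((d*ε : ℝ) : ℂ) * (τ * (starRingEnd ℂ) w) := by
    rw [map_mul, Complex.conj_ofReal]
    push_cast
    ring
  have hns : Complex.normSq (τ * (d:ℂ) + (ε:ℂ) * w)
      = d^2 + 2*(ε*d*R) + ε^2 * N := by
    rw [Complex.normSq_add, Complex.normSq_mul, Complex.normSq_mul, hconj,
      Complex.re_ofReal_mul, hR]
    have h1 : Complex.normSq τ = 1 := by rw [← Complex.sq_norm, hτ]; norm_num
    have h2 : Complex.normSq (d:ℂ) = d^2 := by rw [Complex.normSq_ofReal]; ring
    have h3 : Complex.normSq (ε:ℂ) = ε^2 := by rw [Complex.normSq_ofReal]; ring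
    rw [h1, h2, h3]; ring
  have hRw : |R| ≤ ‖w‖ := by
    rw [← hR]
    calc |(τ * (starRingEnd ℂ) w).re| ≤ ‖τ * (starRingEnd ℂ) w‖ :=
          Complex.abs_re_le_norm _
      _ = ‖w‖ := by rw [norm_mul, hτ, Complex.norm_conj, one_mul]
  have hεR : ε * |R| ≤ 1/4 :=
    le_trans (mul_le_mul_of_nonneg_left hRw hε) hsmall
  have hεRlow : -(1/4) ≤ ε*R := by
    nlinarith [mul_le_mul_of_nonneg_left (neg_abs_le R) hε]
  have hM : (1:ℝ) ≤ 2 + ε*R := by linarith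
  have expand : (2 + ε*R + ε^2*N)^2 - (d^2 + 2*(ε*d*R) + ε^2*N)
      = (2-d)*(2 + d + 2*(ε*R)) + (ε^2*N)*(3 + 2*(ε*R)) + (ε*R)^2 + (ε^2*N)^2 := by
    ring
  have t1 : 0 ≤ (2-d)*(2 + d + 2*(ε*R)) := mul_nonneg (by linarith) (by linarith)
  have t2 : 0 ≤ (ε^2*N)*(3 + 2*(ε*R)) :=
    mul_nonneg (mul_nonneg (sq_nonneg ε) hN0) (by linarith)
  have htarget : Complex.normSq (τ * (d:ℂ) + (ε:ℂ) * w) ≤ (2 + ε*R + ε^2*N)^2 := by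
    rw [hns]
    nlinarith [t1, t2, sq_nonneg (ε*R), sq_nonneg (ε^2*N)]
  have hsq := Complex.sq_norm (τ * (d:ℂ) + (ε:ℂ) * w)
  have hM2 : (0:ℝ) ≤ 2 + ε*R + ε^2*N := by positivity
  refine le_of_pow_le_pow_left₀ two_ne_zero hM2 ?_
  rw [hsq]
  exact htarget

set_option maxHeartbeats 2000000 in
lemma norming_lemma [CompactSpace Z] [T2Space Z] [Nonempty Z]
    {a b : Z} {τ : ℂ} (hτ : ‖τ‖ = 1)
    {u v : C(Z, ℝ)}
    (hu01 : ∀ x, u x ∈ Set.Icc (0:ℝ) 1) (hv01 : ∀ x, v x ∈ Set.Icc (0:ℝ) 1)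
    (hupeak : ∀ x, x ≠ a → u x < 1) (hvpeak : ∀ x, x ≠ b → v x < 1)
    {f₀ : C(Z,ℂ)} (hf₀ : ∀ x, f₀ x = τ * (((u x : ℝ) : ℂ) - ((v x : ℝ) : ℂ)))
    (θ : C(Z,ℂ) → ℂ)
    (hθlin : ∀ (c : ℂ) (h k : C(Z,ℂ)), θ (c • h + k) = c * θ h + θ k)
    (hθbd : ∀ h, ‖θ h‖ ≤ cdiam h)
    (hθf₀ : θ f₀ = 2) :
    ∀ h : C(Z,ℂ), θ h = (starRingEnd ℂ) τ * (h a - h b) := by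
  have hθ0 : θ 0 = 0 := by
    have h := hθlin 1 0 0
    simp only [one_smul, add_zero, one_mul] at h
    exact (left_eq_add.mp h)
  have hθs : ∀ (c : ℂ) (k : C(Z,ℂ)), θ (c • k) = c * θ k := by
    intro c k; have h := hθlin c k 0; simpa [hθ0] using h
  have step1 : ∀ h : C(Z,ℂ), (θ h).re ≤ ((starRingEnd ℂ) τ * (h a - h b)).re := by
    intro h
    obtain ⟨C, hC1, hC⟩ := cfun_bound h
    have hdiff : ∀ x y : Z, ‖h x - h y‖ ≤ 2*C := fun x y => by
      calc ‖h x - h y‖ ≤ ‖h x‖ + ‖h y‖ := by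
            simpa using norm_sub_le (h x) (h y)
        _ ≤ 2*C := by linarith [hC x, hC y]
    set w : ℂ := h a - h b with hw
    set R : ℝ := ((starRingEnd ℂ) τ * w).re with hRdef
    have hRR : (τ * (starRingEnd ℂ) w).re = R := by
      have hcc : (starRingEnd ℂ) (τ * (starRingEnd ℂ) w) = (starRingEnd ℂ) τ * w := by
        rw [map_mul, Complex.conj_conj]
      rw [hRdef, ← hcc, Complex.conj_re]
    have hwabs : ‖w‖ ≤ 2*C := hdiff a b
    have hRabs : |R| ≤ 2*C := by
      rw [hRdef]
      calc |((starRingEnd ℂ) τ * w).re| ≤ ‖(starRingEnd ℂ) τ * w‖ :=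
            Complex.abs_re_le_norm _
        _ = ‖w‖ := by rw [norm_mul, Complex.norm_conj, hτ, one_mul]
        _ ≤ 2*C := hwabs
    refine le_of_forall_pos_le_add (fun δ hδ => ?_)
    have hAopen : IsOpen {x : Z | ‖h x - h a‖ < δ/8} :=
      IsOpen.preimage (continuous_norm.comp ((map_continuous h).sub continuous_const))
        isOpen_Iio
    have haA : a ∈ {x : Z | ‖h x - h a‖ < δ/8} := by
      simp only [Set.mem_setOf_eq, sub_self, norm_zero]
      positivity
    have hBopen : IsOpen {x : Z | ‖h x - h b‖ < δ/8} :=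
      IsOpen.preimage (continuous_norm.comp ((map_continuous h).sub continuous_const))
        isOpen_Iio
    have hbB : b ∈ {x : Z | ‖h x - h b‖ < δ/8} := by
      simp only [Set.mem_setOf_eq, sub_self, norm_zero]
      positivity
    obtain ⟨κ₁, hκ₁pos, hκ₁le, hκ₁⟩ := peak_nbhd_s13 hupeak hAopen haA
    obtain ⟨κ₂, hκ₂pos, hκ₂le, hκ₂⟩ := peak_nbhd_s13 hvpeak hBopen hbB
    set κ := min κ₁ κ₂ with hκdef
    have hκpos : 0 < κ := lt_min hκ₁pos hκ₂pos
    have hκ1 : κ ≤ 1 := le_trans (min_le_left _ _) hκ₁le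
    set ε := min (κ / (8*(C+1))) (δ / (8*(C+1)^2)) with hεdef
    have hεpos : 0 < ε := lt_min (by positivity) (by positivity)
    have hε1 : ε ≤ κ / (8*(C+1)) := min_le_left _ _
    have hε2 : ε ≤ δ / (8*(C+1)^2) := min_le_right _ _
    have hεC : ε * (2*C) ≤ κ/4 := by
      have h1 : ε * (2*C) ≤ (κ / (8*(C+1))) * (2*C) :=
        mul_le_mul_of_nonneg_right hε1 (by linarith)
      have h2 : (κ / (8*(C+1))) * (2*C) ≤ κ/4 := by
        rw [div_mul_eq_mul_div, div_le_div_iff₀ (by positivity) (by norm_num)]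
        nlinarith
      linarith
    have hεw : ε * ‖w‖ ≤ 1/4 := by
      have := mul_le_mul_of_nonneg_left hwabs (le_of_lt hεpos)
      linarith [hεC]
    have hεR4 : ε * |R| ≤ κ/4 := by
      have := mul_le_mul_of_nonneg_left hRabs (le_of_lt hεpos)
      linarith [hεC]
    have hεsq : ε * (4*C^2) ≤ δ/2 := by
      have h1 : ε * (4*C^2) ≤ (δ / (8*(C+1)^2)) * (4*C^2) :=
        mul_le_mul_of_nonneg_right hε2 (by positivity)
      have h2 : (δ / (8*(C+1)^2)) * (4*C^2) ≤ δ/2 := by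
        rw [div_mul_eq_mul_div, div_le_div_iff₀ (by positivity) (by norm_num)]
        nlinarith
      linarith
    have main : ∀ (x y : Z) (d : ℝ), d = (u x - v x) - (u y - v y) → 2 - κ < d →
        ‖τ * ((d:ℝ):ℂ) + (ε:ℂ) * (h x - h y)‖ ≤ 2 + ε*(R + δ) := by
      intro x y d hddef hd
      have hux : 1 - κ ≤ u x := by
        have h1 := (hv01 y).2; have h2 := (hu01 y).1; have h3 := (hv01 x).1
        linarith
      have hvy : 1 - κ ≤ v y := by
        have h1 := (hu01 x).2; have h2 := (hv01 x).1; have h3 := (hu01 y).1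
        linarith
      have hxA : x ∈ {x : Z | ‖h x - h a‖ < δ/8} :=
        hκ₁ x (by linarith [min_le_left κ₁ κ₂])
      have hyB : y ∈ {x : Z | ‖h x - h b‖ < δ/8} :=
        hκ₂ y (by linarith [min_le_right κ₁ κ₂])
      simp only [Set.mem_setOf_eq] at hxA hyB
      have hd2 : d ≤ 2 := by
        have e1 := (hu01 x).2; have e2 := (hv01 x).1
        have e3 := (hu01 y).1; have e4 := (hv01 y).2
        rw [hddef]; linarith
      have hd1 : 1 ≤ d := by linarith
      have he : ‖(h x - h y) - w‖ ≤ δ/4 := by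
        have heq : (h x - h y) - w = (h x - h a) - (h y - h b) := by rw [hw]; ring
        rw [heq]
        have htri := norm_sub_le (h x - h a) (h y - h b)
        calc ‖(h x - h a) - (h y - h b)‖
            ≤ ‖h x - h a‖ + ‖h y - h b‖ := htri
          _ ≤ δ/4 := by linarith
      have hsq := sq_step hτ hd1 hd2 (le_of_lt hεpos) hRR hεw
      have hsplit : τ * ((d:ℝ):ℂ) + (ε:ℂ) * (h x - h y)
          = (τ * ((d:ℝ):ℂ) + (ε:ℂ)*w) + (ε:ℂ)*((h x - h y) - w) := by ring
      rw [hsplit]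
      calc ‖(τ * ((d:ℝ):ℂ) + (ε:ℂ)*w) + (ε:ℂ)*((h x - h y) - w)‖
          ≤ ‖τ * ((d:ℝ):ℂ) + (ε:ℂ)*w‖
            + ‖(ε:ℂ)*((h x - h y) - w)‖ := norm_add_le _ _
        _ ≤ (2 + ε*R + ε^2 * Complex.normSq w) + ε*(δ/4) := by
            refine add_le_add hsq ?_
            rw [norm_mul, Complex.norm_real, Real.norm_eq_abs, _root_.abs_of_nonneg (le_of_lt hεpos)]
            exact mul_le_mul_of_nonneg_left he (le_of_lt hεpos)
        _ ≤ 2 + ε*(R + δ) := by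
            have hNb : Complex.normSq w ≤ 4*C^2 := by
              rw [← Complex.sq_norm]
              nlinarith [norm_nonneg w, hwabs]
            have hq : ε^2 * Complex.normSq w ≤ ε*(δ/2) := by
              calc ε^2 * Complex.normSq w ≤ ε^2 * (4*C^2) :=
                    mul_le_mul_of_nonneg_left hNb (sq_nonneg ε)
                _ = ε * (ε * (4*C^2)) := by ring
                _ ≤ ε * (δ/2) := mul_le_mul_of_nonneg_left hεsq (le_of_lt hεpos)
            nlinarith [mul_pos hεpos hδ]
    have keybound : ∀ x y : Z,
        ‖(f₀ + (ε:ℂ) • h) x - (f₀ + (ε:ℂ) • h) y‖ ≤ 2 + ε*(R + δ) := by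
      intro x y
      have hval : (f₀ + (ε:ℂ) • h) x - (f₀ + (ε:ℂ) • h) y
          = τ * (((((u x - v x) - (u y - v y)) : ℝ)):ℂ) + (ε:ℂ) * (h x - h y) := by
        simp only [ContinuousMap.add_apply, ContinuousMap.smul_apply, smul_eq_mul, hf₀]
        push_cast
        ring
      rw [hval]
      set d : ℝ := (u x - v x) - (u y - v y) with hddef
      rcases lt_or_ge (2 - κ) d with hcase | hcase
      · exact main x y d hddef hcase
      rcases lt_or_ge (2 - κ) (-d) with hcase2 | hcase2
      · have hmain := main y x (-d) (by rw [hddef]; ring) hcase2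
        have heq : ‖τ * ((d:ℝ):ℂ) + (ε:ℂ) * (h x - h y)‖
            = ‖τ * (((-d : ℝ)):ℂ) + (ε:ℂ) * (h y - h x)‖ := by
          rw [show τ * (((-d:ℝ)):ℂ) + (ε:ℂ)*(h y - h x)
              = -(τ * ((d:ℝ):ℂ) + (ε:ℂ)*(h x - h y)) by push_cast; ring]
          rw [norm_neg]
        rw [heq]
        exact hmain
      · calc ‖τ * ((d:ℝ):ℂ) + (ε:ℂ)*(h x - h y)‖
            ≤ ‖τ * ((d:ℝ):ℂ)‖ + ‖(ε:ℂ)*(h x - h y)‖ :=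
              norm_add_le _ _
          _ ≤ |d| + ε*(2*C) := by
              rw [norm_mul, norm_mul, hτ, one_mul, Complex.norm_real, Complex.norm_real,
                  Real.norm_eq_abs, Real.norm_eq_abs,
                _root_.abs_of_nonneg (le_of_lt hεpos)]
              exact add_le_add (le_refl _) (mul_le_mul_of_nonneg_left (hdiff x y) (le_of_lt hεpos))
          _ ≤ (2 - κ) + κ/4 := by
              have habs : |d| ≤ 2 - κ := abs_le.mpr ⟨by linarith, hcase⟩
              linarith
          _ ≤ 2 + ε*(R + δ) := by
              have h1 : -(κ/4) ≤ ε*R := by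
                nlinarith [mul_le_mul_of_nonneg_left (neg_abs_le R) (le_of_lt hεpos)]
              nlinarith [mul_pos hεpos hδ, hκpos]
    have hcd : cdiam (f₀ + (ε:ℂ) • h) ≤ 2 + ε*(R + δ) := cdiam_le_s13 keybound
    have hθval : θ (f₀ + (ε:ℂ) • h) = 2 + (ε:ℂ) * θ h := by
      rw [show f₀ + (ε:ℂ)•h = (ε:ℂ)•h + f₀ from add_comm _ _, hθlin, hθf₀]
      ring
    have hre : 2 + ε * (θ h).re ≤ 2 + ε*(R + δ) := by
      have h1 : (θ (f₀ + (ε:ℂ)•h)).re = 2 + ε * (θ h).re := by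
        rw [hθval]
        simp [Complex.add_re, Complex.re_ofReal_mul]
      calc 2 + ε*(θ h).re = (θ (f₀ + (ε:ℂ)•h)).re := h1.symm
        _ ≤ ‖θ (f₀ + (ε:ℂ)•h)‖ := Complex.re_le_norm _
        _ ≤ cdiam (f₀ + (ε:ℂ)•h) := hθbd _
        _ ≤ 2 + ε*(R + δ) := hcd
    have hfin : (θ h).re ≤ R + δ :=
      (mul_le_mul_iff_right₀ hεpos).mp (by linarith)
    exact hfin
  intro h
  have hneg : ∀ k : C(Z,ℂ), θ (-k) = - θ k := by
    intro k
    have hh := hθs (-1) k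
    simpa using hh
  set ζ : ℂ := (starRingEnd ℂ) τ * (h a - h b) with hζ
  have H1 := step1 h
  have H2' := step1 (-h)
  have H3' := step1 (Complex.I • h)
  have H4' := step1 (-(Complex.I • h))
  have hH2 : (-(θ h)).re ≤ (-ζ).re := by
    have e1 : θ (-h) = -(θ h) := hneg h
    have e2 : (starRingEnd ℂ) τ * ((-h) a - (-h) b) = -ζ := by
      simp only [ContinuousMap.neg_apply, hζ]; ring
    rw [e1, e2] at H2'
    exact H2'
  have hH3 : (Complex.I * θ h).re ≤ (Complex.I * ζ).re := by
    have e1 : θ (Complex.I • h) = Complex.I * θ h := hθs _ _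
    have e2 : (starRingEnd ℂ) τ * ((Complex.I • h) a - (Complex.I • h) b) = Complex.I * ζ := by
      simp only [ContinuousMap.smul_apply, smul_eq_mul, hζ]; ring
    rw [e1, e2] at H3'
    exact H3'
  have hH4 : (-(Complex.I * θ h)).re ≤ (-(Complex.I * ζ)).re := by
    have e1 : θ (-(Complex.I • h)) = -(Complex.I * θ h) := by rw [hneg, hθs]
    have e2 : (starRingEnd ℂ) τ * ((-(Complex.I • h)) a - (-(Complex.I • h)) b)
        = -(Complex.I * ζ) := by
      simp only [ContinuousMap.neg_apply, ContinuousMap.smul_apply, smul_eq_mul, hζ]; ring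
    rw [e1, e2] at H4'
    exact H4'
  have hre : (θ h).re = ζ.re := by
    simp only [Complex.neg_re] at hH2
    linarith
  have him : (θ h).im = ζ.im := by
    simp only [Complex.neg_re, Complex.mul_re, Complex.I_re, Complex.I_im] at hH3 hH4
    simp only [zero_mul, one_mul, zero_sub, neg_neg] at hH3 hH4
    linarith
  exact Complex.ext hre him


lemma unimod_mul_conj {lam : ℂ} (h : ‖lam‖ = 1) : (starRingEnd ℂ) lam * lam = 1 := by
  rw [mul_comm, Complex.mul_conj]
  norm_cast
  rw [← Complex.sq_norm, h]
  norm_num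

lemma pair_eq_of_mem {α : Type*} {a₁ a₂ x y : α} (hx : x ∈ ({a₁,a₂}:Set α))
    (hy : y ∈ ({a₁,a₂}:Set α)) (hxy : x ≠ y) : ({a₁,a₂} : Set α) = {x,y} := by
  simp only [Set.mem_insert_iff, Set.mem_singleton_iff] at hx hy
  rcases hx with rfl|rfl <;> rcases hy with rfl|rfl
  · exact absurd rfl hxy
  · rfl
  · exact Set.pair_comm _ _
  · exact absurd rfl hxy

lemma pair_cases {α : Type*} {a₁ a₂ b₁ b₂ : α} (ha : a₁ ≠ a₂)
    (h : ({a₁,a₂} : Set α) = {b₁,b₂}) :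
    (b₁ = a₁ ∧ b₂ = a₂) ∨ (b₁ = a₂ ∧ b₂ = a₁) := by
  have h1 : b₁ ∈ ({a₁,a₂} : Set α) := by rw [h]; simp
  have h2 : b₂ ∈ ({a₁,a₂} : Set α) := by rw [h]; simp
  have h3 : a₁ ∈ ({b₁,b₂} : Set α) := by rw [← h]; simp
  have h4 : a₂ ∈ ({b₁,b₂} : Set α) := by rw [← h]; simp
  simp only [Set.mem_insert_iff, Set.mem_singleton_iff] at h1 h2 h3 h4
  rcases h1 with hb1|hb1 <;> rcases h2 with hb2|hb2
  · exfalso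
    rcases h4 with h4|h4
    · exact ha (h4.trans hb1).symm
    · exact ha ((h4.trans hb2).symm)
  · exact Or.inl ⟨hb1, hb2⟩
  · exact Or.inr ⟨hb1, hb2⟩
  · exfalso
    rcases h3 with h3|h3
    · exact ha (h3.trans hb1)
    · exact ha (h3.trans hb2)

lemma case0_empty {X Y : Type*} [TopologicalSpace X] [CompactSpace X] [T2Space X] [Nonempty X]
    [TopologicalSpace Y] [CompactSpace Y] [Nonempty Y]
    (Δ : C(X,ℂ) → C(Y,ℂ)) (hdiam : ∀ f, cdiam (Δ f) = cdiam f)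
    {p₁ p₂ q₁ q₂ : X} (h12 : p₁ ≠ p₂) (h34 : q₁ ≠ q₂) (h13 : p₁ ≠ q₁) (h14 : p₁ ≠ q₂)
    (h23 : p₂ ≠ q₁) (h24 : p₂ ≠ q₂)
    {a₁ a₂ b₁ b₂ : Y} {lam nu : ℂ} (hlam : ‖lam‖ = 1) (hnu : ‖nu‖ = 1)
    (hrla : ∀ f, Δ f a₁ - Δ f a₂ = lam * (f p₁ - f p₂))
    (hrlb : ∀ f, Δ f b₁ - Δ f b₂ = nu * (f q₁ - f q₂)) :
    ({a₁, a₂} : Set Y) ∩ {b₁, b₂} = ∅ := by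
  rw [Set.eq_empty_iff_forall_notMem]
  rintro y ⟨hy1, hy2⟩
  simp only [Set.mem_insert_iff, Set.mem_singleton_iff] at hy1 hy2
  have hkey : ∃ (β : ℂ), ‖β‖ = 1 ∧ ∃ A B : Y,
      ∀ f : C(X,ℂ), lam * (f p₁ - f p₂) + β * (f q₁ - f q₂) = Δ f A - Δ f B := by
    rcases hy1 with rfl|rfl
    · rcases hy2 with h|h
      · refine ⟨-nu, by rw [norm_neg, hnu], b₂, a₂, fun f => ?_⟩
        have h1 := hrla f
        rw [h] at h1
        linear_combination (hrlb f) - h1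
      · refine ⟨nu, hnu, b₁, a₂, fun f => ?_⟩
        have h1 := hrla f
        rw [h] at h1
        linear_combination -h1 - (hrlb f)
    · rcases hy2 with h|h
      · refine ⟨nu, hnu, a₁, b₂, fun f => ?_⟩
        have h1 := hrla f
        rw [h] at h1
        linear_combination -h1 - (hrlb f)
      · refine ⟨-nu, by rw [norm_neg, hnu], a₁, b₁, fun f => ?_⟩
        have h1 := hrla f
        rw [h] at h1
        linear_combination (hrlb f) - h1
  obtain ⟨β, hβ, A, B, hid⟩ := hkey
  refine four_point_contra h12 h13 h14 h23 h24 h34 hlam hβ (fun F => ?_)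
  rw [hid F]
  calc ‖Δ F A - Δ F B‖ ≤ cdiam (Δ F) := abs_sub_le_cdiam _ _ _
    _ = cdiam F := hdiam F

set_option maxHeartbeats 1000000 in
lemma pinned_row {X Y : Type*} [TopologicalSpace X] [CompactSpace X] [T2Space X]
    [FirstCountableTopology X] [Nonempty X]
    [TopologicalSpace Y] [CompactSpace Y] [Nonempty Y]
    (Δ : C(X,ℂ) → C(Y,ℂ))
    {c z : X} (hcz : c ≠ z) {lam : ℂ} (hlam : ‖lam‖ = 1)
    {a₁ a₂ : Y}
    (hrla : ∀ f, Δ f a₁ - Δ f a₂ = lam * (f c - f z)) :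
    ∃ f₂ : C(X,ℂ), ∀ (T : C(X,ℂ) →ₗ[ℂ] C(Y,ℂ)), (∀ h, cdiam (T h) = cdiam h) →
      T f₂ = Δ f₂ → ∀ h : C(X,ℂ), T h a₁ - T h a₂ = lam * (h c - h z) := by
  obtain ⟨u, huc, hu01, huout, hupeak⟩ :=
    gdelta_bump c ({z}ᶜ : Set X) isOpen_compl_singleton (by simpa using hcz)
  obtain ⟨v, hvz, hv01, hvout, hvpeak⟩ :=
    gdelta_bump z ({c}ᶜ : Set X) isOpen_compl_singleton (by simpa using hcz.symm)
  have huz : u z = 0 := huout z (by simp)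
  have hvc : v c = 0 := hvout c (by simp)
  set f₂ : C(X,ℂ) := ContinuousMap.mk
    (fun x => (starRingEnd ℂ) lam * (((u x : ℝ):ℂ) - ((v x : ℝ):ℂ)))
    (continuous_const.mul ((Complex.continuous_ofReal.comp u.continuous).sub
      (Complex.continuous_ofReal.comp v.continuous))) with hf₂def
  refine ⟨f₂, fun T hTdiam hTf => ?_⟩
  have hτ : ‖(starRingEnd ℂ) lam‖ = 1 := by rw [Complex.norm_conj, hlam]
  have hf₀ : ∀ x, f₂ x = (starRingEnd ℂ) lam * (((u x : ℝ):ℂ) - ((v x : ℝ):ℂ)) := fun x => rfl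
  have hθlin : ∀ (cc : ℂ) (h k : C(X,ℂ)),
      (fun h : C(X,ℂ) => T h a₁ - T h a₂) (cc • h + k)
        = cc * (T h a₁ - T h a₂) + (T k a₁ - T k a₂) := by
    intro cc h k
    simp only [map_add, map_smul, ContinuousMap.add_apply, ContinuousMap.smul_apply,
      smul_eq_mul]
    ring
  have hθbd : ∀ h : C(X,ℂ), ‖T h a₁ - T h a₂‖ ≤ cdiam h := by
    intro h
    calc ‖T h a₁ - T h a₂‖ ≤ cdiam (T h) := abs_sub_le_cdiam _ _ _
      _ = cdiam h := hTdiam h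
  have hθf₀ : T f₂ a₁ - T f₂ a₂ = 2 := by
    rw [hTf, hrla f₂]
    have h1 : f₂ c = (starRingEnd ℂ) lam := by
      rw [hf₀ c, huc, hvc]
      norm_num
    have h2 : f₂ z = -((starRingEnd ℂ) lam) := by
      rw [hf₀ z, huz, hvz]
      norm_num
    rw [h1, h2]
    linear_combination 2 * (unimod_mul_conj hlam)
  have hres := norming_lemma hτ hu01 hv01 hupeak hvpeak hf₀
    (fun h : C(X,ℂ) => T h a₁ - T h a₂) hθlin hθbd hθf₀
  intro h
  have := hres h
  rwa [Complex.conj_conj] at this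

lemma case1_inter {X Y : Type*} [TopologicalSpace X] [CompactSpace X] [T2Space X]
    [FirstCountableTopology X] [Nonempty X]
    [TopologicalSpace Y] [CompactSpace Y] [T2Space Y] [Nonempty Y]
    (Δ : C(X,ℂ) → C(Y,ℂ)) (hΔ : TwoLocalDiamPreserving Δ)
    {c z w : X} (hcz : c ≠ z) (hcw : c ≠ w) (hzw : z ≠ w)
    {a₁ a₂ b₁ b₂ : Y} (ha : a₁ ≠ a₂) (hb : b₁ ≠ b₂)
    {lam nu : ℂ} (hlam : ‖lam‖ = 1) (hnu : ‖nu‖ = 1)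
    (hrla : ∀ f, Δ f a₁ - Δ f a₂ = lam * (f c - f z))
    (hrlb : ∀ f, Δ f b₁ - Δ f b₂ = nu * (f c - f w)) :
    (({a₁, a₂} : Set Y) ∩ {b₁, b₂}).Nonempty := by
  by_contra hcon
  rw [Set.not_nonempty_iff_eq_empty, Set.eq_empty_iff_forall_notMem] at hcon
  have hd : ∀ s t : Y, s ∈ ({a₁,a₂}:Set Y) → t ∈ ({b₁,b₂}:Set Y) → s ≠ t := by
    intro s t hs ht heq
    exact hcon s ⟨hs, heq ▸ ht⟩
  have h11 : a₁ ≠ b₁ := hd a₁ b₁ (by simp) (by simp)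
  have h12' : a₁ ≠ b₂ := hd a₁ b₂ (by simp) (by simp)
  have h21 : a₂ ≠ b₁ := hd a₂ b₁ (by simp) (by simp)
  have h22 : a₂ ≠ b₂ := hd a₂ b₂ (by simp) (by simp)
  obtain ⟨f₂, hf₂⟩ := pinned_row Δ hcz hlam hrla
  obtain ⟨g₂, hg₂⟩ := pinned_row Δ hcw hnu hrlb
  obtain ⟨T, hTbij, hTdp, hTf, hTg⟩ := hΔ f₂ g₂
  have hTdiam : ∀ h, cdiam (T h) = cdiam h := by
    intro h
    have h' := hTdp h 0
    rwa [map_zero, sub_zero, sub_zero] at h'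
  have rowa := hf₂ T hTdiam hTf
  have rowb := hg₂ T hTdiam hTg
  have hαβ : ‖-(starRingEnd ℂ) nu‖ = 1 := by
    rw [norm_neg, Complex.norm_conj, hnu]
  refine four_point_contra ha h11 h12' h21 h22 hb
    (by rw [Complex.norm_conj, hlam]) hαβ (fun F => ?_)
  obtain ⟨H, hH⟩ := hTbij.2 F
  have e1 : F a₁ - F a₂ = lam * (H c - H z) := by rw [← hH]; exact rowa H
  have e2 : F b₁ - F b₂ = nu * (H c - H w) := by rw [← hH]; exact rowb H
  have key : (starRingEnd ℂ) lam * (F a₁ - F a₂) + (-(starRingEnd ℂ) nu) * (F b₁ - F b₂)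
      = H w - H z := by
    rw [e1, e2]
    linear_combination (H c - H z) * (unimod_mul_conj hlam)
      - (H c - H w) * (unimod_mul_conj hnu)
  rw [key]
  calc ‖H w - H z‖ ≤ cdiam H := abs_sub_le_cdiam H w z
    _ = cdiam (T H) := (hTdiam H).symm
    _ = cdiam F := by rw [hH]

lemma case1_ncard {X Y : Type*} [TopologicalSpace X] [CompactSpace X] [T2Space X]
    [FirstCountableTopology X] [Nonempty X]
    [TopologicalSpace Y] [CompactSpace Y] [T2Space Y] [Nonempty Y]
    (Δ : C(X,ℂ) → C(Y,ℂ)) (hΔ : TwoLocalDiamPreserving Δ)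
    {c z w : X} (hcz : c ≠ z) (hcw : c ≠ w) (hzw : z ≠ w)
    {a₁ a₂ b₁ b₂ : Y} (ha : a₁ ≠ a₂) (hb : b₁ ≠ b₂)
    {lam nu : ℂ} (hlam : ‖lam‖ = 1) (hnu : ‖nu‖ = 1)
    (hrla : ∀ f, Δ f a₁ - Δ f a₂ = lam * (f c - f z))
    (hrlb : ∀ f, Δ f b₁ - Δ f b₂ = nu * (f c - f w)) :
    (({a₁, a₂} : Set Y) ∩ {b₁, b₂}).ncard = 1 := by
  obtain ⟨e, he⟩ := case1_inter Δ hΔ hcz hcw hzw ha hb hlam hnu hrla hrlb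
  have hneq : ({a₁,a₂} : Set Y) ≠ {b₁,b₂} := by
    intro heq
    obtain ⟨P, hPS, hPT, -⟩ := bump_pair ({z} : Set X) {c, w}
      (Set.finite_singleton z) ((Set.finite_singleton w).insert c)
      (by rw [Set.disjoint_iff_forall_ne]
          rintro s hs t ht
          simp only [Set.mem_singleton_iff, Set.mem_insert_iff] at hs ht
          rcases ht with rfl|rfl
          · exact hs ▸ hcz.symm
          · exact hs ▸ hzw)
    have hPz : P z = 1 := hPS z rfl
    have hPc : P c = 0 := hPT c (by simp)
    have hPw : P w = 0 := hPT w (by simp)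
    rcases pair_cases ha heq with ⟨e1, e2⟩ | ⟨e1, e2⟩
    · have h1 := hrla P
      have h2 := hrlb P
      rw [e1, e2] at h2
      rw [hPc, hPz] at h1
      rw [hPc, hPw] at h2
      have h3 : lam * (0 - 1) = nu * (0 - 0) := h1.symm.trans h2
      have : lam = 0 := by linear_combination -h3
      rw [this] at hlam
      simp at hlam
    · have h1 := hrla P
      have h2 := hrlb P
      rw [e1, e2] at h2
      rw [hPc, hPz] at h1
      rw [hPc, hPw] at h2
      have : lam = 0 := by linear_combination h1 + h2
      rw [this] at hlam
      simp at hlam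
  have hsub : ({a₁,a₂} : Set Y) ∩ {b₁,b₂} = {e} := by
    apply Set.eq_singleton_iff_unique_mem.mpr
    refine ⟨he, fun x hx => ?_⟩
    by_contra hxe
    have h1 : ({a₁,a₂} : Set Y) = {x, e} := pair_eq_of_mem hx.1 he.1 hxe
    have h2 : ({b₁,b₂} : Set Y) = {x, e} := pair_eq_of_mem hx.2 he.2 hxe
    exact hneq (h1.trans h2.symm)
  rw [hsub, Set.ncard_singleton]

end Aux


/-- Claim 9: `Γ` preserves the cardinality of intersections of the underlying unordered pairs:
`|{x₁,x₂} ∩ {x₃,x₄}| = |Λ_Y(Γ(x₁,x₂)) ∩ Λ_Y(Γ(x₃,x₄))|`. -/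
theorem Gamma_preserves_intersection_card
    {X Y : Type*} [TopologicalSpace X] [CompactSpace X] [T2Space X] [FirstCountableTopology X]
    [TopologicalSpace Y] [CompactSpace Y] [T2Space Y] [FirstCountableTopology Y]
    (h2X : ∃ a b : X, a ≠ b) (h2Y : ∃ a b : Y, a ≠ b)
    (Δ : C(X, ℂ) → C(Y, ℂ)) (hΔ : TwoLocalDiamPreserving Δ)
    (Γ : X × X → Y × Y)
    (hΓ : ∀ p : X × X, p.1 ≠ p.2 → Aset Δ p.1 p.2 = {Γ p}) :
    ∀ p q : X × X, p.1 ≠ p.2 → q.1 ≠ q.2 →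
      (({p.1, p.2} : Set X) ∩ {q.1, q.2}).ncard =
        (({(Γ p).1, (Γ p).2} : Set Y) ∩ {(Γ q).1, (Γ q).2}).ncard := by
  intro p q hp hq
  haveI hXne : Nonempty X := ⟨p.1⟩
  haveI hYne : Nonempty Y := ⟨(Γ p).1⟩
  have hrel : ∀ r : X × X, r.1 ≠ r.2 → (Γ r).1 ≠ (Γ r).2 ∧ ∃ lam : ℂ, lam ∈ Tplus ∧
      ‖lam‖ = 1 ∧ ∀ f : C(X,ℂ), Δ f (Γ r).1 - Δ f (Γ r).2 = lam * (f r.1 - f r.2) := by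
    intro r hr
    have hmem : Γ r ∈ Aset Δ r.1 r.2 := by rw [hΓ r hr]; exact rfl
    obtain ⟨hne, lam, hT, hB⟩ := hmem
    exact ⟨hne, lam, hT, (Set.mem_iInter.mp hB 0).2.1, fun f => (Set.mem_iInter.mp hB f).2.2⟩
  have huniq : ∀ (r : X × X), r.1 ≠ r.2 → ∀ (w : Y × Y) (lam : ℂ), lam ∈ Tplus →
      ‖lam‖ = 1 → w.1 ≠ w.2 →
      (∀ f : C(X,ℂ), Δ f w.1 - Δ f w.2 = lam * (f r.1 - f r.2)) → w = Γ r := by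
    intro r hr w lam hT habs hw hrelw
    have hmem : w ∈ Aset Δ r.1 r.2 :=
      ⟨hw, lam, hT, Set.mem_iInter.mpr (fun f => ⟨hw, habs, hrelw f⟩)⟩
    rw [hΓ r hr] at hmem
    exact hmem
  obtain ⟨hGp, lamp, hlampT, hlampA, hrelp⟩ := hrel p hp
  obtain ⟨hGq, lamq, hlamqT, hlamqA, hrelq⟩ := hrel q hq
  have hdiam : ∀ f, cdiam (Δ f) = cdiam f := by
    intro f
    obtain ⟨T, -, hTdp, hTf, -⟩ := hΔ f f
    have h := hTdp f 0
    rwa [map_zero, sub_zero, sub_zero, hTf] at h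
  by_cases hq1 : q.1 ∈ ({p.1, p.2} : Set X)
  · by_cases hq2 : q.2 ∈ ({p.1, p.2} : Set X)
    · -- CASE 2 : the unordered pairs coincide
      simp only [Set.mem_insert_iff, Set.mem_singleton_iff] at hq1 hq2
      rcases hq1 with h1|h1 <;> rcases hq2 with h2|h2
      · exact absurd (h1.trans h2.symm) hq
      · have hqp : q = p := Prod.ext h1 h2
        rw [hqp, Set.inter_self, Set.inter_self, Set.ncard_pair hp, Set.ncard_pair hGp]
      · have hGqp : ((Γ p).2, (Γ p).1) = Γ q := by
          apply huniq q hq _ lamp hlampT hlampA hGp.symm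
          intro f
          rw [h1, h2]
          linear_combination -(hrelp f)
        have e1 : ({q.1, q.2} : Set X) = {p.1, p.2} := by
          rw [h1, h2]; exact Set.pair_comm _ _
        have e2 : ({(Γ q).1, (Γ q).2} : Set Y) = {(Γ p).1, (Γ p).2} := by
          rw [← hGqp]; exact Set.pair_comm _ _
        rw [e1, e2, Set.inter_self, Set.inter_self, Set.ncard_pair hp, Set.ncard_pair hGp]
      · exact absurd (h1.trans h2.symm) hq
    · -- CASE 1a : q.1 is the shared point
      simp only [Set.mem_insert_iff, Set.mem_singleton_iff] at hq1 hq2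
      push_neg at hq2
      have hLHS : ({p.1, p.2} : Set X) ∩ {q.1, q.2} = {q.1} := by
        apply Set.eq_singleton_iff_unique_mem.mpr
        refine ⟨⟨by rcases hq1 with h|h <;> simp [h], by simp⟩, ?_⟩
        rintro x ⟨hx1, hx2⟩
        simp only [Set.mem_insert_iff, Set.mem_singleton_iff] at hx1 hx2
        rcases hx2 with h|h
        · exact h
        · exfalso; rw [h] at hx1; exact hx1.elim hq2.1 hq2.2
      rw [hLHS, Set.ncard_singleton]
      rcases hq1 with h1|h1
      · have hres := case1_ncard Δ hΔ (c := p.1) (z := p.2) (w := q.2)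
          hp (fun h => hq2.1 h.symm) (fun h => hq2.2 h.symm) hGp hGq hlampA hlamqA
          hrelp (fun f => by rw [← h1]; exact hrelq f)
        exact hres.symm
      · have hflip : ∀ f : C(X,ℂ), Δ f (Γ p).2 - Δ f (Γ p).1 = lamp * (f p.2 - f p.1) :=
          fun f => by linear_combination -(hrelp f)
        have hres := case1_ncard Δ hΔ (c := p.2) (z := p.1) (w := q.2)
          hp.symm (fun h => hq2.2 h.symm) (fun h => hq2.1 h.symm) hGp.symm hGq hlampA hlamqA
          hflip (fun f => by rw [← h1]; exact hrelq f)
        rw [Set.pair_comm (Γ p).1 (Γ p).2]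
        exact hres.symm
  · by_cases hq2 : q.2 ∈ ({p.1, p.2} : Set X)
    · -- CASE 1b : q.2 is the shared point
      simp only [Set.mem_insert_iff, Set.mem_singleton_iff] at hq1 hq2
      push_neg at hq1
      have hLHS : ({p.1, p.2} : Set X) ∩ {q.1, q.2} = {q.2} := by
        apply Set.eq_singleton_iff_unique_mem.mpr
        refine ⟨⟨by rcases hq2 with h|h <;> simp [h], by simp⟩, ?_⟩
        rintro x ⟨hx1, hx2⟩
        simp only [Set.mem_insert_iff, Set.mem_singleton_iff] at hx1 hx2
        rcases hx2 with h|h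
        · exfalso; rw [h] at hx1; exact hx1.elim hq1.1 hq1.2
        · exact h
      rw [hLHS, Set.ncard_singleton]
      have hflipq : ∀ f : C(X,ℂ), Δ f (Γ q).2 - Δ f (Γ q).1 = lamq * (f q.2 - f q.1) :=
        fun f => by linear_combination -(hrelq f)
      rcases hq2 with h2|h2
      · have hres := case1_ncard Δ hΔ (c := p.1) (z := p.2) (w := q.1)
          hp (fun h => hq1.1 h.symm) (fun h => hq1.2 h.symm) hGp hGq.symm hlampA hlamqA
          hrelp (fun f => by rw [← h2]; exact hflipq f)
        rw [Set.pair_comm (Γ q).1 (Γ q).2]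
        exact hres.symm
      · have hflip : ∀ f : C(X,ℂ), Δ f (Γ p).2 - Δ f (Γ p).1 = lamp * (f p.2 - f p.1) :=
          fun f => by linear_combination -(hrelp f)
        have hres := case1_ncard Δ hΔ (c := p.2) (z := p.1) (w := q.1)
          hp.symm (fun h => hq1.2 h.symm) (fun h => hq1.1 h.symm) hGp.symm hGq.symm hlampA hlamqA
          hflip (fun f => by rw [← h2]; exact hflipq f)
        rw [Set.pair_comm (Γ p).1 (Γ p).2, Set.pair_comm (Γ q).1 (Γ q).2]
        exact hres.symm
    · -- CASE 0 : disjoint pairs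
      simp only [Set.mem_insert_iff, Set.mem_singleton_iff] at hq1 hq2
      push_neg at hq1 hq2
      have hL : ({p.1, p.2} : Set X) ∩ {q.1, q.2} = ∅ := by
        rw [Set.eq_empty_iff_forall_notMem]
        rintro x ⟨hx1, hx2⟩
        simp only [Set.mem_insert_iff, Set.mem_singleton_iff] at hx1 hx2
        rcases hx1 with rfl|rfl <;> rcases hx2 with h|h
        · exact hq1.1 h.symm
        · exact hq2.1 h.symm
        · exact hq1.2 h.symm
        · exact hq2.2 h.symm
      have hR := case0_empty Δ hdiam hp hq (fun h => hq1.1 h.symm) (fun h => hq2.1 h.symm)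
        (fun h => hq1.2 h.symm) (fun h => hq2.2 h.symm) hlampA hlamqA hrelp hrelq
      rw [hL, hR, Set.ncard_empty, Set.ncard_empty]
end
end

section
/- Let X and Y be first countable compact Hausdorff spaces, each with at least two points, let Δ : C(X) → C(Y) be a 2-local diameter-preserving map, and let φ : X → Y be an injective map such that for every (x₁, x₂) ∈ X × X with x₁ ≠ x₂ there exists β(x₁, x₂) ∈ 𝕋⁺ with Δ(f)(φ(x₁)) − Δ(f)(φ(x₂)) = β(x₁, x₂)·(f(x₁) − f(x₂)) for all f ∈ C(X). Then there exists a single number λ ∈ 𝕋 such that Δ(f)(φ(x₁)) − Δ(f)(φ(x₂)) = λ·(f(x₁) − f(x₂)) for all f ∈ C(X) and all x₁, x₂ ∈ X. -/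
noncomputable section

/-!
Write `D f x = Δ(f)(φ(x))` and `β(p, q)` for the factor of a pair. For `q ≠ p ≠ r` take `f` with
`f(p) = 0` and `f(q) = f(r) = 1` (complete regularity); as `D f q - D f r = β(q, r) · 0 = 0`,
evaluating at `f` gives `β(p, q) = β(p, r)`. So pairs sharing a point have the same factor, and
any two pairs are linked through at most one intermediate pair. The common factor lies in `𝕋⁺`,
hence on the unit circle.
-/

open Set

section

variable {X : Type*} [TopologicalSpace X]

def HasDiffFactor (D : C(X, ℂ) → X → ℂ) (x₁ x₂ : X) (β : ℂ) : Prop :=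
  ∀ f : C(X, ℂ), D f x₁ - D f x₂ = β * (f x₁ - f x₂)

namespace HasDiffFactor

variable {D : C(X, ℂ) → X → ℂ} {β : ℂ}

theorem refl (x : X) (β : ℂ) : HasDiffFactor D x x β := fun f => by simp

theorem symm {x₁ x₂ : X} (h : HasDiffFactor D x₁ x₂ β) : HasDiffFactor D x₂ x₁ β :=
  fun f => by linear_combination -h f

end HasDiffFactor

theorem exists_continuous_eq_zero_eq_one_eq_one [T35Space X] {p q r : X} (hq : p ≠ q)
    (hr : p ≠ r) : ∃ f : C(X, ℂ), f p = 0 ∧ f q = 1 ∧ f r = 1 := by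
  obtain ⟨f, hf, hfp, hf1⟩ := CompletelyRegularSpace.completely_regular p {q, r}
    (toFinite _).isClosed (by simp [hq, hr])
  refine ⟨⟨fun x => ((f x : ℝ) : ℂ), by fun_prop⟩, ?_, ?_, ?_⟩ <;>
    simp [hfp, hf1 (mem_insert q {r}), hf1 (mem_insert_of_mem q rfl)]

section Factors

variable [T35Space X] {D : C(X, ℂ) → X → ℂ}
  (hD : ∀ x₁ x₂ : X, x₁ ≠ x₂ → ∃ β, HasDiffFactor D x₁ x₂ β)
include hD

theorem HasDiffFactor.eq_of_common_left {p q r : X} (hq : p ≠ q) (hr : p ≠ r) {β γ : ℂ}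
    (hβ : HasDiffFactor D p q β) (hγ : HasDiffFactor D p r γ) : β = γ := by
  obtain ⟨f, hfp, hfq, hfr⟩ := exists_continuous_eq_zero_eq_one_eq_one hq hr
  have hqr : D f q = D f r := by
    rcases eq_or_ne q r with rfl | hqr
    · rfl
    · obtain ⟨δ, hδ⟩ := hD q r hqr
      simpa [hfq, hfr, sub_eq_zero] using hδ f
  have h₁ := hβ f
  have h₂ := hγ f
  rw [hfp, hfq] at h₁
  rw [hfp, hfr] at h₂
  linear_combination h₁ - h₂ + hqr

theorem HasDiffFactor.eq_of_ne {a b p q : X} (hab : a ≠ b) (hpq : p ≠ q) {β γ : ℂ}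
    (hβ : HasDiffFactor D a b β) (hγ : HasDiffFactor D p q γ) : γ = β := by
  by_cases hpa : p = a
  · subst hpa
    exact hγ.eq_of_common_left hD hpq hab hβ
  · obtain ⟨δ, hδ⟩ := hD p a hpa
    calc γ = δ := hγ.eq_of_common_left hD hpq hpa hδ
      _ = β := hδ.symm.eq_of_common_left hD (Ne.symm hpa) hab hβ

theorem HasDiffFactor.of_ne {a b : X} (hab : a ≠ b) {β : ℂ} (hβ : HasDiffFactor D a b β)
    (x₁ x₂ : X) : HasDiffFactor D x₁ x₂ β := by
  rcases eq_or_ne x₁ x₂ with rfl | h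
  · exact .refl _ _
  · obtain ⟨γ, hγ⟩ := hD x₁ x₂ h
    rwa [← hβ.eq_of_ne hD hab h hγ]

end Factors

end

theorem norm_eq_one_of_mem_Tplus {z : ℂ} (hz : z ∈ Tplus) : ‖z‖ = 1 := by
  obtain ⟨t, -, -, rfl⟩ := hz
  exact Complex.norm_exp_ofReal_mul_I t

theorem exists_uniform_unimodular_constant_general
    {X Y : Type*} [TopologicalSpace X] [CompactSpace X] [T2Space X]
    [TopologicalSpace Y]
    (Δ : C(X, ℂ) → C(Y, ℂ))
    (φ : X → Y)
    (hβ : ∀ x₁ x₂ : X, x₁ ≠ x₂ → ∃ β ∈ Tplus,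
      ∀ f : C(X, ℂ), Δ f (φ x₁) - Δ f (φ x₂) = β * (f x₁ - f x₂)) :
    ∃ lam : ℂ, ‖lam‖ = 1 ∧
      ∀ (f : C(X, ℂ)) (x₁ x₂ : X),
        Δ f (φ x₁) - Δ f (φ x₂) = lam * (f x₁ - f x₂) := by
  by_cases hX : ∃ a b : X, a ≠ b
  · obtain ⟨a, b, hab⟩ := hX
    obtain ⟨β, hβT, hβab⟩ := hβ a b hab
    have hD : ∀ x₁ x₂ : X, x₁ ≠ x₂ → ∃ β, HasDiffFactor (fun f x => Δ f (φ x)) x₁ x₂ β :=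
      fun x₁ x₂ h => (hβ x₁ x₂ h).imp fun _ => And.right
    exact ⟨β, norm_eq_one_of_mem_Tplus hβT, fun f x₁ x₂ => HasDiffFactor.of_ne hD hab hβab x₁ x₂ f⟩
  · push Not at hX
    exact ⟨1, norm_one, fun f x₁ x₂ => by simp [hX x₁ x₂]⟩

/-- Claim 12: if for every pair of distinct points `x₁, x₂` there is `β(x₁,x₂) ∈ 𝕋⁺` with
`Δ(f)(φ(x₁)) - Δ(f)(φ(x₂)) = β(x₁,x₂)(f(x₁) - f(x₂))` for all `f`, then there is a single
`λ ∈ 𝕋` working for all pairs. -/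
theorem exists_uniform_unimodular_constant
    {X Y : Type*} [TopologicalSpace X] [CompactSpace X] [T2Space X] [FirstCountableTopology X]
    [TopologicalSpace Y] [CompactSpace Y] [T2Space Y] [FirstCountableTopology Y]
    (h2X : ∃ a b : X, a ≠ b) (h2Y : ∃ a b : Y, a ≠ b)
    (Δ : C(X, ℂ) → C(Y, ℂ)) (hΔ : TwoLocalDiamPreserving Δ)
    (φ : X → Y) (hφ : Function.Injective φ)
    (hβ : ∀ x₁ x₂ : X, x₁ ≠ x₂ → ∃ β ∈ Tplus,
      ∀ f : C(X, ℂ), Δ f (φ x₁) - Δ f (φ x₂) = β * (f x₁ - f x₂)) :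
    ∃ lam : ℂ, ‖lam‖ = 1 ∧
      ∀ (f : C(X, ℂ)) (x₁ x₂ : X),
        Δ f (φ x₁) - Δ f (φ x₂) = lam * (f x₁ - f x₂) :=
  exists_uniform_unimodular_constant_general Δ φ hβ
end
end
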